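/- arXiv:2405.19903 — 5 statements merged into one kernel-verified Lean document; each statement's English description precedes it below -/
import Mathlib

section
/- Let f : [0,∞) → [0,∞) be a measurable function such that ∫_0^δ f(u) du < ∞ for every δ > 0. Then the kernel K_f is a covariance function: for all s,t ≥ 0 the value K_f(s,t) is finite, K_f(s,t) = K_f(t,s), and K_f is positive semidefinite, i.e., for every n ∈ ℕ, all t_1,…,t_n ≥ 0 and all real numbers y_1,…,y_n, one has Σ_{i=1}^n Σ_{j=1}^n y_i y_j K_f(t_i, t_j) ≥ 0. -/
open MeasureTheory Real Filter

/-- The kernel `K_f(s,t)`, with `x * log x = 0` at `x = 0` (automatic since `Real.log 0 = 0`). -/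
noncomputable def Kf (f : ℝ → ℝ) (s t : ℝ) : ℝ :=
  2 * ∫ u in (0:ℝ)..(min s t),
    f u * ((s + t - 2*u) * Real.log (s + t - 2*u)
      - (s - u) * Real.log (s - u) - (t - u) * Real.log (t - u))

/-- The increment functional `D_f(s,t) = K_f(t,t) - 2 K_f(s,t) + K_f(s,s)`,
equal to `E (ζ_t - ζ_s)^2` for a centered process with covariance `K_f`. -/
noncomputable def Df (f : ℝ → ℝ) (s t : ℝ) : ℝ :=
  Kf f t t - 2 * Kf f s t + Kf f s s

open Set

noncomputable def gk (a b : ℝ) : ℝ :=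
  (a+b) * Real.log (a+b) - a * Real.log a - b * Real.log b

lemma aux_exp_int {c : ℝ} (hc : 0 < c) :
    IntegrableOn (fun t => Real.exp (-(c*t))) (Set.Ioi (0:ℝ)) := by
  simpa [neg_mul] using exp_neg_integrableOn_Ioi 0 hc

lemma aux_exp_deriv (c : ℝ) (x : ℝ) (hc : c ≠ 0) :
    HasDerivAt (fun t => -Real.exp (-(c*t))/c) (Real.exp (-(c*x))) x := by
  have h1 : HasDerivAt (fun t : ℝ => -(c*t)) (-c) x := by
    have := ((hasDerivAt_id x).const_mul c).neg
    simp only [id_eq, mul_one] at this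
    exact this
  have h2 := (Real.hasDerivAt_exp (-(c*x))).comp x h1
  have h3 := (h2.neg).div_const c
  refine h3.congr_deriv ?_
  rw [div_eq_iff hc]; ring
lemma aux_exp_eval {c : ℝ} (hc : 0 < c) :
    ∫ t in Set.Ioi (0:ℝ), Real.exp (-(c*t)) = 1/c := by
  have hcont : ContinuousWithinAt (fun t => -Real.exp (-(c*t))/c) (Set.Ici 0) 0 :=
    (Continuous.continuousWithinAt (by continuity))
  have htend : Tendsto (fun t => -Real.exp (-(c*t))/c) atTop (nhds 0) := by
    have h1 : Tendsto (fun t : ℝ => -(c*t)) atTop atBot := by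
      simpa [neg_mul] using tendsto_neg_atBot_iff.mpr (tendsto_id.const_mul_atTop hc)
    have := (Real.tendsto_exp_atBot.comp h1).neg.div_const c
    simpa using this
  have := MeasureTheory.integral_Ioi_of_hasDerivAt_of_tendsto hcont
    (fun x _ => aux_exp_deriv c x hc.ne') (aux_exp_int hc) htend
  rw [this, mul_zero, neg_zero, Real.exp_zero]; ring

lemma aux_inv_eval {p : ℝ} (hp : 0 < p) {b : ℝ} (hb : 0 ≤ b) :
    ∫ q in Set.Ioc (0:ℝ) b, (p+q)⁻¹ = Real.log (p+b) - Real.log p := by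
  rw [← intervalIntegral.integral_of_le hb]
  have key : ∀ x ∈ Set.uIcc (0:ℝ) b, HasDerivAt (fun q => Real.log (p+q)) ((p+x)⁻¹) x := by
    intro x hx
    rw [Set.uIcc_of_le hb] at hx
    have hpx : 0 < p + x := by linarith [hx.1]
    have h1 : HasDerivAt (fun q : ℝ => p + q) 1 x := by simpa using (hasDerivAt_id x).const_add p
    have := (Real.hasDerivAt_log hpx.ne').comp x h1
    rw [mul_one] at this
    exact this
  have hint : IntervalIntegrable (fun x : ℝ => (p+x)⁻¹) volume 0 b := by
    apply ContinuousOn.intervalIntegrable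
    intro x hx
    rw [Set.uIcc_of_le hb] at hx
    have hpx : 0 < p + x := by linarith [hx.1]
    exact ContinuousWithinAt.inv₀
      (Continuous.continuousWithinAt (by continuity)) hpx.ne'
  rw [intervalIntegral.integral_eq_sub_of_hasDerivAt key hint]
  simp

lemma aux_expIoc_eval {t : ℝ} (ht : 0 < t) {a : ℝ} (ha : 0 ≤ a) :
    ∫ p in Set.Ioc (0:ℝ) a, Real.exp (-(p*t)) = (1 - Real.exp (-(a*t)))/t := by
  rw [← intervalIntegral.integral_of_le ha]
  have key : ∀ x ∈ Set.uIcc (0:ℝ) a, HasDerivAt (fun p => -Real.exp (-(p*t))/t) (Real.exp (-(x*t))) x := by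
    intro x _
    have h1 : HasDerivAt (fun p : ℝ => -(p*t)) (-t) x := by
      have := ((hasDerivAt_id x).mul_const t).neg
      simp only [id_eq, one_mul] at this
      exact this
    have h2 := (Real.hasDerivAt_exp (-(x*t))).comp x h1
    have h3 := (h2.neg).div_const t
    refine h3.congr_deriv ?_
    rw [div_eq_iff ht.ne']; ring
  have hint : IntervalIntegrable (fun p : ℝ => Real.exp (-(p*t))) volume 0 a :=
    (Continuous.continuousOn (by continuity)).intervalIntegrable
  rw [intervalIntegral.integral_eq_sub_of_hasDerivAt key hint]
  rw [zero_mul, neg_zero, Real.exp_zero]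
  ring

lemma aux_logdiff_hasDeriv {b : ℝ} (hb : 0 < b) {x : ℝ} (hx : 0 < x) :
    HasDerivAt (fun p => (p+b) * Real.log (p+b) - p * Real.log p)
      (Real.log (x+b) - Real.log x) x := by
  have h1 : HasDerivAt (fun p : ℝ => (p+b) * Real.log (p+b)) (Real.log (x+b) + 1) x := by
    have := Real.hasDerivAt_mul_log (x := x + b) (by positivity)
    exact this.comp_add_const x b
  have h2 := Real.hasDerivAt_mul_log hx.ne'
  have := h1.sub h2
  refine this.congr_deriv ?_
  ring

lemma aux_logdiff_cont {b : ℝ} :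
    Continuous (fun p => (p+b) * Real.log (p+b) - p * Real.log p) := by
  have h1 : Continuous fun p : ℝ => (p+b) * Real.log (p+b) :=
    Real.continuous_mul_log.comp (continuous_id.add continuous_const)
  exact h1.sub Real.continuous_mul_log

lemma aux_B2_int {a b : ℝ} (ha : 0 < a) (hb : 0 < b) :
    IntegrableOn (fun p => Real.log (p+b) - Real.log p) (Set.Ioc (0:ℝ) a) := by
  apply intervalIntegral.integrableOn_deriv_of_nonneg aux_logdiff_cont.continuousOn
    (fun x hx => aux_logdiff_hasDeriv hb hx.1)
  intro x hx
  have : Real.log x ≤ Real.log (x+b) := Real.log_le_log hx.1 (by linarith)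
  linarith

lemma aux_B2_eval {a b : ℝ} (ha : 0 < a) (hb : 0 < b) :
    ∫ p in Set.Ioc (0:ℝ) a, (Real.log (p+b) - Real.log p) = gk a b := by
  rw [← intervalIntegral.integral_of_le ha.le]
  have hint : IntervalIntegrable (fun p => Real.log (p+b) - Real.log p) volume 0 a := by
    rw [intervalIntegrable_iff_integrableOn_Ioc_of_le ha.le]
    exact aux_B2_int ha hb
  rw [intervalIntegral.integral_eq_sub_of_hasDerivAt_of_le ha.le
    aux_logdiff_cont.continuousOn (fun x hx => aux_logdiff_hasDeriv hb hx.1) hint]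
  simp only [gk, zero_add, zero_mul, Real.log_zero, mul_zero]
  ring

lemma aux_exp_le_one {x : ℝ} (hx : 0 ≤ x) : Real.exp (-x) ≤ 1 := by
  rw [show (1:ℝ) = Real.exp 0 from (Real.exp_zero).symm]
  exact Real.exp_le_exp.mpr (by linarith)

lemma aux_phi_nonneg {c t : ℝ} (hc : 0 ≤ c) (ht : 0 < t) :
    0 ≤ (1 - Real.exp (-(c*t)))/t := by
  apply div_nonneg _ ht.le
  have := aux_exp_le_one (x := c*t) (by positivity)
  linarith

lemma aux_phi_le {c t : ℝ} (hc : 0 ≤ c) (ht : 0 < t) :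
    (1 - Real.exp (-(c*t)))/t ≤ c := by
  rw [div_le_iff₀ ht]
  have := Real.add_one_le_exp (-(c*t))
  linarith

lemma aux_phi_le' {c t : ℝ} (hc : 0 ≤ c) (ht : 0 < t) :
    (1 - Real.exp (-(c*t)))/t ≤ 1/t := by
  have h := (Real.exp_pos (-(c*t))).le
  gcongr
  linarith

lemma aux_swap1_int {p b : ℝ} (hp : 0 < p) (hb : 0 ≤ b) :
    IntegrableOn (fun t => Real.exp (-(p*t)) * ((1 - Real.exp (-(b*t)))/t)) (Set.Ioi (0:ℝ)) := by
  apply Integrable.mono ((aux_exp_int hp).const_mul b)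
  · apply Measurable.aestronglyMeasurable
    fun_prop
  · rw [ae_restrict_iff' measurableSet_Ioi]
    filter_upwards with t ht
    have h1 : 0 ≤ (1 - Real.exp (-(b*t)))/t := aux_phi_nonneg hb ht
    have h2 : (1 - Real.exp (-(b*t)))/t ≤ b := aux_phi_le hb ht
    rw [Real.norm_of_nonneg (by positivity), Real.norm_of_nonneg (by positivity)]
    calc Real.exp (-(p*t)) * ((1 - Real.exp (-(b*t)))/t)
        ≤ Real.exp (-(p*t)) * b := by
          exact mul_le_mul_of_nonneg_left h2 (Real.exp_pos _).le
      _ = b * Real.exp (-(p*t)) := mul_comm _ _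

lemma aux_inner_q {t : ℝ} (ht : 0 < t) (p : ℝ) {b : ℝ} (hb : 0 ≤ b) :
    ∫ q in Set.Ioc (0:ℝ) b, Real.exp (-((p+q)*t))
      = Real.exp (-(p*t)) * ((1 - Real.exp (-(b*t)))/t) := by
  have h : ∀ q : ℝ, Real.exp (-((p+q)*t)) = Real.exp (-(p*t)) * Real.exp (-(q*t)) := by
    intro q; rw [← Real.exp_add]; ring_nf
  simp_rw [h]
  rw [MeasureTheory.integral_const_mul, aux_expIoc_eval ht hb]

lemma aux_swap1_eval {p b : ℝ} (hp : 0 < p) (hb : 0 < b) :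
    ∫ t in Set.Ioi (0:ℝ), Real.exp (-(p*t)) * ((1 - Real.exp (-(b*t)))/t)
      = Real.log (p+b) - Real.log p := by
  set μ := volume.restrict (Set.Ioc (0:ℝ) b) with hμ
  set ν := volume.restrict (Set.Ioi (0:ℝ)) with hν
  have hFc : Continuous (fun z : ℝ × ℝ => Real.exp (-((p + z.1) * z.2))) := by continuity
  have hF : Integrable (Function.uncurry fun q t => Real.exp (-((p+q)*t))) (μ.prod ν) := by
    have heq : Function.uncurry (fun q t => Real.exp (-((p+q)*t)))
        = fun z : ℝ × ℝ => Real.exp (-((p+z.1)*z.2)) := rfl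
    rw [heq, MeasureTheory.integrable_prod_iff' hFc.aestronglyMeasurable]
    constructor
    · filter_upwards with t
      exact Continuous.integrableOn_Ioc (by continuity)
    · apply MeasureTheory.Integrable.congr (aux_swap1_int hp hb.le)
      rw [Filter.EventuallyEq, ae_restrict_iff' measurableSet_Ioi]
      filter_upwards with t ht
      simp only [Function.uncurry_apply_pair, Real.norm_eq_abs,
        abs_of_nonneg (Real.exp_pos _).le]
      exact (aux_inner_q ht p hb.le).symm
  have swap := MeasureTheory.integral_integral_swap hF
  have hL : ∫ q in Set.Ioc (0:ℝ) b, (∫ t in Set.Ioi (0:ℝ), Real.exp (-((p+q)*t)))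
      = Real.log (p+b) - Real.log p := by
    rw [← aux_inv_eval hp hb.le]
    apply setIntegral_congr_fun measurableSet_Ioc
    intro q hq
    simp only
    rw [aux_exp_eval (by linarith [hq.1] : (0:ℝ) < p + q), one_div]
  have hR : ∫ t in Set.Ioi (0:ℝ), (∫ q in Set.Ioc (0:ℝ) b, Real.exp (-((p+q)*t)))
      = ∫ t in Set.Ioi (0:ℝ), Real.exp (-(p*t)) * ((1 - Real.exp (-(b*t)))/t) := by
    apply setIntegral_congr_fun measurableSet_Ioi
    intro t ht
    simp only
    exact aux_inner_q ht p hb.le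
  rw [← hR, ← swap, hL]

lemma aux_A_int {a b : ℝ} (ha : 0 ≤ a) (hb : 0 ≤ b) :
    IntegrableOn (fun t => ((1 - Real.exp (-(a*t)))/t) * ((1 - Real.exp (-(b*t)))/t))
      (Set.Ioi (0:ℝ)) := by
  have hmeas : Measurable (fun t : ℝ => ((1 - Real.exp (-(a*t)))/t) * ((1 - Real.exp (-(b*t)))/t)) := by
    fun_prop
  have h1 : IntegrableOn (fun t => ((1 - Real.exp (-(a*t)))/t) * ((1 - Real.exp (-(b*t)))/t))
      (Set.Ioc (0:ℝ) 1) := by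
    apply Measure.integrableOn_of_bounded (M := a * b)
    · exact (measure_Ioc_lt_top).ne
    · exact hmeas.aestronglyMeasurable
    · rw [ae_restrict_iff' measurableSet_Ioc]
      filter_upwards with t ht
      rw [Real.norm_of_nonneg (mul_nonneg (aux_phi_nonneg ha ht.1) (aux_phi_nonneg hb ht.1))]
      exact mul_le_mul (aux_phi_le ha ht.1) (aux_phi_le hb ht.1) (aux_phi_nonneg hb ht.1) ha
  have h2 : IntegrableOn (fun t => ((1 - Real.exp (-(a*t)))/t) * ((1 - Real.exp (-(b*t)))/t))
      (Set.Ioi (1:ℝ)) := by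
    apply Integrable.mono (integrableOn_Ioi_rpow_of_lt (by norm_num : (-2:ℝ) < -1) one_pos)
      hmeas.aestronglyMeasurable
    rw [ae_restrict_iff' measurableSet_Ioi]
    filter_upwards with t ht
    have ht0 : (0:ℝ) < t := lt_trans one_pos ht
    have hrw : t ^ (-2:ℝ) = (1/t) * (1/t) := by
      rw [show (-2:ℝ) = -1 + -1 by norm_num, Real.rpow_add ht0, Real.rpow_neg_one]
      simp [one_div]
    rw [Real.norm_of_nonneg (mul_nonneg (aux_phi_nonneg ha ht0) (aux_phi_nonneg hb ht0)),
      Real.norm_of_nonneg (by positivity : (0:ℝ) ≤ t ^ (-2:ℝ)), hrw]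
    exact mul_le_mul (aux_phi_le' ha ht0) (aux_phi_le' hb ht0) (aux_phi_nonneg hb ht0)
      (by positivity)
  have := h1.union h2
  rwa [Set.Ioc_union_Ioi_eq_Ioi zero_le_one] at this

lemma aux_A_eval_pos {a b : ℝ} (ha : 0 < a) (hb : 0 < b) :
    ∫ t in Set.Ioi (0:ℝ), ((1 - Real.exp (-(a*t)))/t) * ((1 - Real.exp (-(b*t)))/t)
      = gk a b := by
  set μ := volume.restrict (Set.Ioc (0:ℝ) a) with hμ
  set ν := volume.restrict (Set.Ioi (0:ℝ)) with hν
  have hFm : Measurable (fun z : ℝ × ℝ =>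
      Real.exp (-(z.1 * z.2)) * ((1 - Real.exp (-(b * z.2)))/z.2)) := by fun_prop
  have hF : Integrable (Function.uncurry fun p t =>
      Real.exp (-(p*t)) * ((1 - Real.exp (-(b*t)))/t)) (μ.prod ν) := by
    have heq : Function.uncurry (fun p t => Real.exp (-(p*t)) * ((1 - Real.exp (-(b*t)))/t))
        = fun z : ℝ × ℝ => Real.exp (-(z.1 * z.2)) * ((1 - Real.exp (-(b * z.2)))/z.2) := rfl
    rw [heq, MeasureTheory.integrable_prod_iff' hFm.aestronglyMeasurable]
    constructor
    · filter_upwards with t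
      apply Continuous.integrableOn_Ioc
      exact (Continuous.mul (by continuity) continuous_const)
    · apply MeasureTheory.Integrable.congr (aux_A_int ha.le hb.le)
      rw [Filter.EventuallyEq, ae_restrict_iff' measurableSet_Ioi]
      filter_upwards with t ht
      have hφ : 0 ≤ (1 - Real.exp (-(b*t)))/t := aux_phi_nonneg hb.le ht
      have : ∀ p : ℝ, ‖Real.exp (-(p*t)) * ((1 - Real.exp (-(b*t)))/t)‖
          = Real.exp (-(p*t)) * ((1 - Real.exp (-(b*t)))/t) := by
        intro p
        rw [Real.norm_of_nonneg (mul_nonneg (Real.exp_pos _).le hφ)]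
      simp only [this]
      rw [MeasureTheory.integral_mul_const, aux_expIoc_eval ht ha.le]
  have swap := MeasureTheory.integral_integral_swap hF
  have hL : ∫ p in Set.Ioc (0:ℝ) a,
      (∫ t in Set.Ioi (0:ℝ), Real.exp (-(p*t)) * ((1 - Real.exp (-(b*t)))/t)) = gk a b := by
    rw [← aux_B2_eval ha hb]
    apply setIntegral_congr_fun measurableSet_Ioc
    intro p hp
    simp only
    exact aux_swap1_eval hp.1 hb
  have hR : ∫ t in Set.Ioi (0:ℝ),
      (∫ p in Set.Ioc (0:ℝ) a, Real.exp (-(p*t)) * ((1 - Real.exp (-(b*t)))/t))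
      = ∫ t in Set.Ioi (0:ℝ), ((1 - Real.exp (-(a*t)))/t) * ((1 - Real.exp (-(b*t)))/t) := by
    apply setIntegral_congr_fun measurableSet_Ioi
    intro t ht
    simp only
    rw [MeasureTheory.integral_mul_const, aux_expIoc_eval ht ha.le]
  rw [← hR, ← swap, hL]

lemma aux_gk_zero_left (b : ℝ) : gk 0 b = 0 := by
  simp [gk]

lemma aux_gk_comm (a b : ℝ) : gk a b = gk b a := by
  simp only [gk]
  rw [add_comm a b]
  ring

lemma aux_A_eval {a b : ℝ} (ha : 0 ≤ a) (hb : 0 ≤ b) :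
    ∫ t in Set.Ioi (0:ℝ), ((1 - Real.exp (-(a*t)))/t) * ((1 - Real.exp (-(b*t)))/t)
      = gk a b := by
  rcases eq_or_lt_of_le ha with h | h
  · simp [← h, aux_gk_zero_left]
  rcases eq_or_lt_of_le hb with h' | h'
  · rw [aux_gk_comm]
    simp [← h', aux_gk_zero_left]
  exact aux_A_eval_pos h h'

lemma aux_gk_psd (n : ℕ) (a : Fin n → ℝ) (ha : ∀ i, 0 ≤ a i) (z : Fin n → ℝ) :
    0 ≤ ∑ i, ∑ j, z i * z j * gk (a i) (a j) := by
  set φ : Fin n → ℝ → ℝ := fun i t => z i * ((1 - Real.exp (-(a i * t)))/t) with hφ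
  have heq : ∀ i j : Fin n, (fun t => φ i t * φ j t)
      = fun t => (z i * z j) *
        (((1 - Real.exp (-(a i * t)))/t) * ((1 - Real.exp (-(a j * t)))/t)) := by
    intro i j; funext t; simp only [hφ]; ring
  have hint : ∀ i j : Fin n, Integrable (fun t => φ i t * φ j t)
      (volume.restrict (Set.Ioi (0:ℝ))) := by
    intro i j
    rw [heq i j]
    exact (aux_A_int (ha i) (ha j)).const_mul (z i * z j)
  have heval : ∀ i j : Fin n, ∫ t in Set.Ioi (0:ℝ), φ i t * φ j t
      = z i * z j * gk (a i) (a j) := by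
    intro i j
    rw [heq i j, MeasureTheory.integral_const_mul, aux_A_eval (ha i) (ha j)]
  have key : ∫ t in Set.Ioi (0:ℝ), (∑ i, φ i t)^2
      = ∑ i, ∑ j, z i * z j * gk (a i) (a j) := by
    have h0 : ∀ t : ℝ, (∑ i, φ i t)^2 = ∑ i, ∑ j, φ i t * φ j t := by
      intro t; rw [sq, Finset.sum_mul_sum]
    simp_rw [h0]
    rw [MeasureTheory.integral_finset_sum]
    · apply Finset.sum_congr rfl
      intro i _
      rw [MeasureTheory.integral_finset_sum]
      · exact Finset.sum_congr rfl fun j _ => heval i j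
      · exact fun j _ => hint i j
    · intro i _
      exact integrable_finset_sum _ (fun j _ => hint i j)
  rw [← key]
  exact MeasureTheory.setIntegral_nonneg measurableSet_Ioi (fun t _ => sq_nonneg _)

lemma aux_integrand_eq (s t u : ℝ) :
    (s + t - 2*u) * Real.log (s + t - 2*u) - (s - u) * Real.log (s - u)
      - (t - u) * Real.log (t - u) = gk (s - u) (t - u) := by
  have h : s - u + (t - u) = s + t - 2*u := by ring
  rw [gk, h]

lemma aux_cont_gk (s t : ℝ) : Continuous (fun u => gk (s - u) (t - u)) := by
  simp only [gk]
  have h1 : Continuous fun u : ℝ => (s - u + (t - u)) * Real.log (s - u + (t - u)) :=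
    Real.continuous_mul_log.comp (by continuity)
  have h2 : Continuous fun u : ℝ => (s - u) * Real.log (s - u) :=
    Real.continuous_mul_log.comp (by continuity)
  have h3 : Continuous fun u : ℝ => (t - u) * Real.log (t - u) :=
    Real.continuous_mul_log.comp (by continuity)
  exact (h1.sub h2).sub h3

lemma aux_part1 (f : ℝ → ℝ)
    (hf_int : ∀ δ : ℝ, 0 < δ → IntervalIntegrable f volume 0 δ)
    (s t : ℝ) (hs : 0 ≤ s) (ht : 0 ≤ t) :
    IntervalIntegrable
      (fun u => f u * ((s + t - 2*u) * Real.log (s + t - 2*u)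
        - (s - u) * Real.log (s - u) - (t - u) * Real.log (t - u)))
      volume 0 (min s t) := by
  have hm : 0 ≤ min s t := le_min hs ht
  have hfi : IntervalIntegrable f volume 0 (min s t) := by
    rcases eq_or_lt_of_le hm with h | h
    · rw [← h]
    · exact hf_int _ h
  have hcont : Continuous (fun u => (s + t - 2*u) * Real.log (s + t - 2*u)
      - (s - u) * Real.log (s - u) - (t - u) * Real.log (t - u)) := by
    have : (fun u => (s + t - 2*u) * Real.log (s + t - 2*u)
        - (s - u) * Real.log (s - u) - (t - u) * Real.log (t - u))
        = fun u => gk (s - u) (t - u) := by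
      funext u; exact aux_integrand_eq s t u
    rw [this]; exact aux_cont_gk s t
  exact hfi.mul_continuousOn hcont.continuousOn

lemma aux_Kf_repr (f : ℝ → ℝ) {s t : ℝ} (hs : 0 ≤ s) (ht : 0 ≤ t) :
    Kf f s t = 2 * ∫ u in Set.Ioi (0:ℝ),
      Set.indicator (Set.Ioc 0 (min s t)) (fun u => f u * gk (s - u) (t - u)) u := by
  rw [Kf, intervalIntegral.integral_of_le (le_min hs ht)]
  congr 1
  rw [MeasureTheory.setIntegral_indicator measurableSet_Ioc,
    Set.inter_eq_right.mpr Set.Ioc_subset_Ioi_self]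
  apply setIntegral_congr_fun measurableSet_Ioc
  intro u _
  simp only
  rw [aux_integrand_eq s t u]

theorem stmt_0 (f : ℝ → ℝ) (hf_meas : Measurable f)
    (hf_nonneg : ∀ u, 0 ≤ u → 0 ≤ f u)
    (hf_int : ∀ δ : ℝ, 0 < δ → IntervalIntegrable f volume 0 δ) :
    (∀ s t : ℝ, 0 ≤ s → 0 ≤ t →
      IntervalIntegrable
        (fun u => f u * ((s + t - 2*u) * Real.log (s + t - 2*u)
          - (s - u) * Real.log (s - u) - (t - u) * Real.log (t - u)))
        volume 0 (min s t)) ∧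
    (∀ s t : ℝ, 0 ≤ s → 0 ≤ t → Kf f s t = Kf f t s) ∧
    (∀ (n : ℕ) (x : Fin n → ℝ) (y : Fin n → ℝ), (∀ i, 0 ≤ x i) →
      0 ≤ ∑ i, ∑ j, y i * y j * Kf f (x i) (x j)) := by
  refine ⟨fun s t hs ht => aux_part1 f hf_int s t hs ht, ?_, ?_⟩
  · -- symmetry
    intro s t hs ht
    rw [Kf, Kf, min_comm t s]
    congr 1
    apply intervalIntegral.integral_congr
    intro u _
    simp only
    rw [add_comm t s]
    ring
  · -- positive semidefiniteness
    intro n x y hx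
    set S : Fin n → Fin n → Set ℝ := fun i j => Set.Ioc 0 (min (x i) (x j)) with hS
    set g : Fin n → Fin n → ℝ → ℝ := fun i j u => f u * gk (x i - u) (x j - u) with hg
    have hI : ∀ i j, Integrable (Set.indicator (S i j) (g i j))
        (volume.restrict (Set.Ioi (0:ℝ))) := by
      intro i j
      have h1 := aux_part1 f hf_int (x i) (x j) (hx i) (hx j)
      rw [intervalIntegrable_iff_integrableOn_Ioc_of_le (le_min (hx i) (hx j))] at h1
      have h2 : IntegrableOn (g i j) (S i j) volume := by
        apply h1.congr_fun _ measurableSet_Ioc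
        intro u _
        rw [hg]
        simp only
        rw [aux_integrand_eq (x i) (x j) u]
      exact (h2.integrable_indicator measurableSet_Ioc).integrableOn
    have expand : ∑ i, ∑ j, y i * y j * Kf f (x i) (x j)
        = 2 * ∑ i, ∑ j, ∫ u in Set.Ioi (0:ℝ),
            (y i * y j) * Set.indicator (S i j) (g i j) u := by
      rw [Finset.mul_sum]
      apply Finset.sum_congr rfl
      intro i _
      rw [Finset.mul_sum]
      apply Finset.sum_congr rfl
      intro j _
      rw [aux_Kf_repr f (hx i) (hx j), MeasureTheory.integral_const_mul]
      ring
    have swap : ∑ i, ∑ j, ∫ u in Set.Ioi (0:ℝ),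
          (y i * y j) * Set.indicator (S i j) (g i j) u
        = ∫ u in Set.Ioi (0:ℝ), ∑ i, ∑ j,
            (y i * y j) * Set.indicator (S i j) (g i j) u := by
      rw [MeasureTheory.integral_finset_sum _
        (fun i _ => integrable_finset_sum _ (fun j _ => (hI i j).const_mul _))]
      apply Finset.sum_congr rfl
      intro i _
      rw [MeasureTheory.integral_finset_sum _ (fun j _ => (hI i j).const_mul _)]
    have pointwise : ∀ u ∈ Set.Ioi (0:ℝ), 0 ≤ ∑ i, ∑ j,
        (y i * y j) * Set.indicator (S i j) (g i j) u := by
      intro u hu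
      have hu0 : (0:ℝ) < u := hu
      set z : Fin n → ℝ := fun i => if u ≤ x i then y i else 0 with hz
      set bb : Fin n → ℝ := fun i => max (x i - u) 0 with hbb
      have hterm : ∀ i j, (y i * y j) * Set.indicator (S i j) (g i j) u
          = f u * (z i * z j * gk (bb i) (bb j)) := by
        intro i j
        by_cases hi : u ≤ x i
        · by_cases hj : u ≤ x j
          · have hmem : u ∈ S i j := ⟨hu0, le_min hi hj⟩
            rw [Set.indicator_of_mem hmem, hg, hz, hbb]
            simp only [if_pos hi, if_pos hj]
            rw [max_eq_left (by linarith : (0:ℝ) ≤ x i - u),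
              max_eq_left (by linarith : (0:ℝ) ≤ x j - u)]
            ring
          · have hmem : u ∉ S i j := fun hmem => hj (le_trans hmem.2 (min_le_right _ _))
            rw [Set.indicator_of_notMem hmem, hz]
            simp only [if_neg hj]
            ring
        · have hmem : u ∉ S i j := fun hmem => hi (le_trans hmem.2 (min_le_left _ _))
          rw [Set.indicator_of_notMem hmem, hz]
          simp only [if_neg hi]
          ring
      have hsum : ∑ i, ∑ j, (y i * y j) * Set.indicator (S i j) (g i j) u
          = f u * ∑ i, ∑ j, z i * z j * gk (bb i) (bb j) := by
        rw [Finset.mul_sum]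
        apply Finset.sum_congr rfl
        intro i _
        rw [Finset.mul_sum]
        apply Finset.sum_congr rfl
        intro j _
        exact hterm i j
      rw [hsum]
      exact mul_nonneg (hf_nonneg u hu0.le)
        (aux_gk_psd n bb (fun i => le_max_right _ _) z)
    rw [expand, swap]
    have := MeasureTheory.setIntegral_nonneg (μ := volume) measurableSet_Ioi pointwise
    linarith
end

section
/- Let f : [0,∞) → [0,∞) be a measurable function such that ∫_0^δ f(u) du < ∞ for every δ > 0, and suppose that lim_{n→∞} (1/n) Σ_{k=1}^{n−1} sqrt( ∫_0^{k/n} f(u) / ((k+1)/n − u) du ) = ∞. Then lim_{n→∞} Σ_{k=0}^{n−1} sqrt( D_f(k/n, (k+1)/n) ) = ∞; that is, the expected total variation of a centered Gaussian process with covariance K_f along uniform partitions of [0,1] diverges. -/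
open MeasureTheory Real Filter

lemma mylog1 (y : ℝ) (h0 : 0 ≤ y) (h1 : y ≤ 1) :
    (y - 1)^2 / 2 ≤ y * Real.log y - y + 1 := by
  rcases h0.eq_or_lt with h | hy
  · simp [← h]; norm_num
  · have e1 : (∫ t in y..1, (1 - t)) = (y - 1)^2 / 2 := by
      rw [intervalIntegral.integral_sub intervalIntegrable_const intervalIntegral.intervalIntegrable_id]
      simp [integral_id]
      ring
    have e2 : (∫ t in y..1, (-Real.log t)) = y * Real.log y - y + 1 := by
      rw [intervalIntegral.integral_neg, integral_log (a := y) (b := 1)]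
      simp; ring
    have hmono : (∫ t in y..1, (1 - t)) ≤ ∫ t in y..1, (-Real.log t) := by
      apply intervalIntegral.integral_mono_on h1
      · exact (continuous_const.sub continuous_id).intervalIntegrable _ _
      · apply ContinuousOn.intervalIntegrable
        apply ContinuousOn.neg
        apply Real.continuousOn_log.mono
        intro x hx
        rw [Set.uIcc_of_le h1] at hx
        exact ne_of_gt (lt_of_lt_of_le hy hx.1)
      · intro x hx
        have hx0 : 0 < x := lt_of_lt_of_le hy hx.1
        have := Real.log_le_sub_one_of_pos hx0
        linarith
    linarith [e1 ▸ e2 ▸ hmono]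

lemma mylog2 (y : ℝ) (h1 : 1 ≤ y) : (y - 1)^2 / (2 * y) ≤ y * Real.log y - y + 1 := by
  have hy : (0:ℝ) < y := lt_of_lt_of_le one_pos h1
  have e2 : (∫ t in (1:ℝ)..y, Real.log t) = y * Real.log y - y + 1 := by
    rw [integral_log (a := 1) (b := y)]; simp
  have e1 : (∫ t in (1:ℝ)..y, (1 - (t^2)⁻¹) / 2) = (y - 1)^2 / (2 * y) := by
    have : ∀ t ∈ Set.uIcc (1:ℝ) y, HasDerivAt (fun x => (x + x⁻¹) / 2) ((1 - (t^2)⁻¹) / 2) t := by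
      intro t ht
      rw [Set.uIcc_of_le h1] at ht
      have ht0 : t ≠ 0 := ne_of_gt (lt_of_lt_of_le one_pos ht.1)
      have := ((hasDerivAt_id t).add (hasDerivAt_inv ht0)).div_const 2
      simpa [sub_eq_add_neg] using this
    rw [intervalIntegral.integral_eq_sub_of_hasDerivAt this]
    · field_simp
      ring
    · apply ContinuousOn.intervalIntegrable
      apply ContinuousOn.div_const
      apply continuousOn_const.sub
      apply ContinuousOn.inv₀ (continuousOn_pow 2)
      intro x hx
      rw [Set.uIcc_of_le h1] at hx
      exact pow_ne_zero 2 (ne_of_gt (lt_of_lt_of_le one_pos hx.1))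
  have hmono : (∫ t in (1:ℝ)..y, (1 - (t^2)⁻¹) / 2) ≤ ∫ t in (1:ℝ)..y, Real.log t := by
    apply intervalIntegral.integral_mono_on h1
    · apply ContinuousOn.intervalIntegrable
      apply ContinuousOn.div_const
      apply continuousOn_const.sub
      apply ContinuousOn.inv₀ (continuousOn_pow 2)
      intro x hx
      rw [Set.uIcc_of_le h1] at hx
      exact pow_ne_zero 2 (ne_of_gt (lt_of_lt_of_le one_pos hx.1))
    · apply ContinuousOn.intervalIntegrable
      apply Real.continuousOn_log.mono
      intro x hx
      rw [Set.uIcc_of_le h1] at hx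
      exact ne_of_gt (lt_of_lt_of_le one_pos hx.1)
    · intro x hx
      have hx1 : (1:ℝ) ≤ x := hx.1
      have hx0 : (0:ℝ) < x := lt_of_lt_of_le one_pos hx1
      have h := Real.one_sub_inv_le_log_of_pos hx0
      have hinv : x⁻¹ ≤ 1 := inv_le_one_of_one_le₀ hx1
      have hinv0 : 0 < x⁻¹ := inv_pos.mpr hx0
      have : (1 - (x^2)⁻¹) / 2 ≤ 1 - x⁻¹ := by
        have : (x^2)⁻¹ = x⁻¹ * x⁻¹ := by rw [sq, mul_inv]
        rw [this]
        nlinarith [sq_nonneg (1 - x⁻¹)]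
      linarith
  linarith [e1 ▸ e2 ▸ hmono]

lemma psi_ge (a b : ℝ) (ha : 0 ≤ a) (hab : a ≤ b) (hb : 0 < b) :
    (b - a)^2 / (8 * b) ≤ a * Real.log (2*a) + b * Real.log (2*b) - (a+b) * Real.log (a+b) := by
  have hb' : b ≠ 0 := hb.ne'
  have hm : (0:ℝ) < (a + b) / 2 := by linarith
  have hm' : (a + b) / 2 ≠ 0 := hm.ne'
  have hab0 : a + b ≠ 0 := by linarith
  have hlab : Real.log (a + b) = Real.log 2 + Real.log ((a+b)/2) := by
    rw [show a + b = 2 * ((a+b)/2) by ring, Real.log_mul two_ne_zero hm']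
    ring_nf
  have hlb : Real.log (2*b) = Real.log 2 + Real.log b := Real.log_mul two_ne_zero hb'
  have key : a * Real.log (2*a) + b * Real.log (2*b) - (a+b) * Real.log (a+b)
      = ((a+b)/2) * ((a/((a+b)/2)) * Real.log (a/((a+b)/2)) - (a/((a+b)/2)) + 1)
      + ((a+b)/2) * ((b/((a+b)/2)) * Real.log (b/((a+b)/2)) - (b/((a+b)/2)) + 1) := by
    rcases ha.eq_or_lt with h0 | h0
    · have ha0 : a = 0 := h0.symm
      subst ha0
      simp only [zero_add, zero_mul, zero_div, Real.log_zero, mul_zero, zero_sub, neg_zero]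
      rw [show b / (b/2) = 2 by field_simp, hlb]
      ring
    · have ha' : a ≠ 0 := h0.ne'
      have hla : Real.log (2*a) = Real.log 2 + Real.log a := Real.log_mul two_ne_zero ha'
      rw [Real.log_div ha' hm', Real.log_div hb' hm', hlab, hla, hlb]
      field_simp
      ring
  rw [key]
  have g1 := mylog1 (a/((a+b)/2)) (div_nonneg ha hm.le) (by rw [div_le_one hm]; linarith)
  have g2 := mylog2 (b/((a+b)/2)) (by rw [le_div_iff₀ hm]; linarith)
  have h1 : 0 ≤ ((a+b)/2) * ((a/((a+b)/2)) * Real.log (a/((a+b)/2)) - (a/((a+b)/2)) + 1) := by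
    apply mul_nonneg hm.le
    nlinarith [g1, sq_nonneg (a/((a+b)/2) - 1)]
  have h2 : (b - a)^2 / (8 * b)
      ≤ ((a+b)/2) * ((b/((a+b)/2)) * Real.log (b/((a+b)/2)) - (b/((a+b)/2)) + 1) := by
    have heq : (b - a)^2 / (8 * b)
        = ((a+b)/2) * ((b/((a+b)/2) - 1)^2 / (2 * (b/((a+b)/2)))) := by
      field_simp
      ring
    rw [heq]
    exact mul_le_mul_of_nonneg_left g2 hm.le
  linarith

lemma ptwise (a b : ℝ) (ha : 0 ≤ a) (hb : 0 < b) :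
    2 * Real.log 2 * b + 2 * Real.log 2 * a
      - 2 * ((a+b) * Real.log (a+b) - a * Real.log a - b * Real.log b)
    = 2 * (a * Real.log (2*a) + b * Real.log (2*b) - (a+b) * Real.log (a+b)) := by
  have hlb : Real.log (2*b) = Real.log 2 + Real.log b := Real.log_mul two_ne_zero hb.ne'
  rcases ha.eq_or_lt with h0 | h0
  · have : a = 0 := h0.symm
    subst this
    simp only [zero_add, zero_mul, mul_zero, add_zero, sub_zero, Real.log_zero]
    rw [hlb]; ring
  · have hla : Real.log (2*a) = Real.log 2 + Real.log a := Real.log_mul two_ne_zero h0.ne'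
    rw [hla, hlb]; ring

lemma contML (g : ℝ → ℝ) (hg : Continuous g) :
    Continuous fun u => g u * Real.log (g u) := Real.continuous_mul_log.comp hg

lemma Df_ge (f : ℝ → ℝ) (hf_nonneg : ∀ u, 0 ≤ u → 0 ≤ f u)
    (hf_int : ∀ δ : ℝ, 0 < δ → IntervalIntegrable f volume 0 δ)
    {s t : ℝ} (hs : 0 < s) (hst : s < t) :
    (t - s)^2 / 2 * ∫ u in (0:ℝ)..s, f u / (t - u) ≤ Df f s t := by
  have ht : 0 < t := hs.trans hst
  simp only [Df, Kf, min_self, min_eq_left hst.le]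
  -- rewrite the diagonal integrands
  have diag : ∀ r : ℝ, 0 < r →
      (∫ u in (0:ℝ)..r, f u * ((r + r - 2*u) * Real.log (r + r - 2*u)
        - (r - u) * Real.log (r - u) - (r - u) * Real.log (r - u)))
      = ∫ u in (0:ℝ)..r, f u * (2 * Real.log 2 * (r - u)) := by
    intro r hr
    apply intervalIntegral.integral_congr
    intro u hu
    beta_reduce
    rw [Set.uIcc_of_le hr.le] at hu
    have hx : 0 ≤ r - u := by linarith [hu.2]
    have h2 : r + r - 2*u = 2*(r - u) := by ring
    rcases hx.eq_or_lt with h | h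
    · rw [h2, ← h]
      norm_num
    · rw [h2, Real.log_mul two_ne_zero h.ne']
      ring
  rw [diag t ht, diag s hs]
  -- integrability facts
  have cst : Continuous fun u : ℝ => 2 * Real.log 2 * (t - u) := by continuity
  have css : Continuous fun u : ℝ => 2 * Real.log 2 * (s - u) := by continuity
  have cG : Continuous fun u : ℝ => (s + t - 2*u) * Real.log (s + t - 2*u)
      - (s - u) * Real.log (s - u) - (t - u) * Real.log (t - u) := by
    exact ((contML (fun u => s + t - 2*u) (by continuity)).sub
      (contML (fun u => s - u) (by continuity))).sub (contML (fun u => t - u) (by continuity))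
  have cPsi : Continuous fun u : ℝ => (s-u) * Real.log (2*(s-u)) + (t-u) * Real.log (2*(t-u))
      - ((s-u)+(t-u)) * Real.log ((s-u)+(t-u)) := by
    have h1 := contML (fun u : ℝ => 2*(s-u)) (by continuity)
    have h2 := contML (fun u : ℝ => 2*(t-u)) (by continuity)
    have h3 := contML (fun u : ℝ => (s-u)+(t-u)) (by continuity)
    have heq : (fun u : ℝ => (s-u) * Real.log (2*(s-u)) + (t-u) * Real.log (2*(t-u))
        - ((s-u)+(t-u)) * Real.log ((s-u)+(t-u)))
        = fun u : ℝ => (1/2) * ((2*(s-u)) * Real.log (2*(s-u)))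
          + (1/2) * ((2*(t-u)) * Real.log (2*(t-u)))
          - ((s-u)+(t-u)) * Real.log ((s-u)+(t-u)) := by
      funext u; ring
    rw [heq]
    exact ((continuous_const.mul h1).add (continuous_const.mul h2)).sub h3
  have iA : IntervalIntegrable (fun u => f u * (2 * Real.log 2 * (t - u))) volume 0 s :=
    (hf_int s hs).mul_continuousOn cst.continuousOn
  have iB : IntervalIntegrable (fun u => f u * (2 * Real.log 2 * (t - u))) volume s t :=
    ((hf_int t ht).mono_set (by
      rw [Set.uIcc_of_le hst.le, Set.uIcc_of_le ht.le]
      exact Set.Icc_subset_Icc hs.le le_rfl)).mul_continuousOn cst.continuousOn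
  have iD : IntervalIntegrable (fun u => f u * (2 * Real.log 2 * (s - u))) volume 0 s :=
    (hf_int s hs).mul_continuousOn css.continuousOn
  have iC : IntervalIntegrable (fun u => f u * ((s + t - 2*u) * Real.log (s + t - 2*u)
      - (s - u) * Real.log (s - u) - (t - u) * Real.log (t - u))) volume 0 s :=
    (hf_int s hs).mul_continuousOn cG.continuousOn
  have iPsi : IntervalIntegrable (fun u => f u * ((s-u) * Real.log (2*(s-u))
      + (t-u) * Real.log (2*(t-u)) - ((s-u)+(t-u)) * Real.log ((s-u)+(t-u)))) volume 0 s :=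
    (hf_int s hs).mul_continuousOn cPsi.continuousOn
  -- split the [0,t] integral
  have split : (∫ u in (0:ℝ)..t, f u * (2 * Real.log 2 * (t - u)))
      = (∫ u in (0:ℝ)..s, f u * (2 * Real.log 2 * (t - u)))
      + ∫ u in s..t, f u * (2 * Real.log 2 * (t - u)) :=
    (intervalIntegral.integral_add_adjacent_intervals iA iB).symm
  rw [split]
  -- combination identity over [0,s]
  have comb : (∫ u in (0:ℝ)..s, f u * (2 * Real.log 2 * (t - u)))
      + (∫ u in (0:ℝ)..s, f u * (2 * Real.log 2 * (s - u)))
      - 2 * ∫ u in (0:ℝ)..s, f u * ((s + t - 2*u) * Real.log (s + t - 2*u)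
          - (s - u) * Real.log (s - u) - (t - u) * Real.log (t - u))
      = 2 * ∫ u in (0:ℝ)..s, f u * ((s-u) * Real.log (2*(s-u))
          + (t-u) * Real.log (2*(t-u)) - ((s-u)+(t-u)) * Real.log ((s-u)+(t-u))) := by
    rw [← intervalIntegral.integral_const_mul, ← intervalIntegral.integral_add iA iD,
      ← intervalIntegral.integral_const_mul,
      ← intervalIntegral.integral_sub (iA.add iD) (iC.const_mul 2)]
    apply intervalIntegral.integral_congr
    intro u hu
    rw [Set.uIcc_of_le hs.le] at hu
    have h1 : 0 ≤ s - u := by linarith [hu.2]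
    have h2 : 0 < t - u := by linarith [hu.2]
    have hp := ptwise (s - u) (t - u) h1 h2
    have h3 : s + t - 2*u = (s - u) + (t - u) := by ring
    beta_reduce
    rw [h3]
    linear_combination (f u) * hp
  -- nonnegativity of the [s,t] piece
  have hB : 0 ≤ ∫ u in s..t, f u * (2 * Real.log 2 * (t - u)) := by
    apply intervalIntegral.integral_nonneg hst.le
    intro u hu
    apply mul_nonneg (hf_nonneg u (le_trans hs.le hu.1))
    have : 0 ≤ Real.log 2 := Real.log_nonneg one_le_two
    nlinarith [hu.2]
  -- lower bound on the psi integral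
  have iL : IntervalIntegrable (fun u => f u * ((t - s)^2 / (8 * (t - u)))) volume 0 s := by
    apply (hf_int s hs).mul_continuousOn
    apply ContinuousOn.div continuousOn_const (by fun_prop)
    intro u hu
    rw [Set.uIcc_of_le hs.le] at hu
    have : u < t := lt_of_le_of_lt hu.2 hst
    exact ne_of_gt (by linarith)
  have mono : (∫ u in (0:ℝ)..s, f u * ((t - s)^2 / (8 * (t - u))))
      ≤ ∫ u in (0:ℝ)..s, f u * ((s-u) * Real.log (2*(s-u))
          + (t-u) * Real.log (2*(t-u)) - ((s-u)+(t-u)) * Real.log ((s-u)+(t-u))) := by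
    apply intervalIntegral.integral_mono_on hs.le iL iPsi
    intro u hu
    have h1 : 0 ≤ s - u := by linarith [hu.2]
    have h2 : 0 < t - u := by linarith [hu.2]
    have hp := psi_ge (s - u) (t - u) h1 (by linarith) h2
    rw [show t - u - (s - u) = t - s by ring] at hp
    exact mul_le_mul_of_nonneg_left hp (hf_nonneg u hu.1)
  have heqI : (∫ u in (0:ℝ)..s, f u * ((t - s)^2 / (8 * (t - u))))
      = (t - s)^2 / 8 * ∫ u in (0:ℝ)..s, f u / (t - u) := by
    rw [← intervalIntegral.integral_const_mul]
    apply intervalIntegral.integral_congr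
    intro u _
    beta_reduce
    rw [← div_div]
    ring
  rw [heqI] at mono
  linarith

theorem stmt_7 (f : ℝ → ℝ) (hf_meas : Measurable f)
    (hf_nonneg : ∀ u, 0 ≤ u → 0 ≤ f u)
    (hf_int : ∀ δ : ℝ, 0 < δ → IntervalIntegrable f volume 0 δ)
    (hdiv : Filter.Tendsto
      (fun n : ℕ => (1 / (n:ℝ)) * ∑ k ∈ Finset.Ico 1 n,
        Real.sqrt (∫ u in (0:ℝ)..((k:ℝ)/(n:ℝ)), f u / (((k:ℝ)+1)/(n:ℝ) - u)))
      Filter.atTop Filter.atTop) :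
    Filter.Tendsto
      (fun n : ℕ => ∑ k ∈ Finset.range n,
        Real.sqrt (Df f ((k:ℝ)/(n:ℝ)) (((k:ℝ)+1)/(n:ℝ))))
      Filter.atTop Filter.atTop := by
  have key : ∀ n : ℕ, ∀ k ∈ Finset.Ico 1 n,
      Real.sqrt 2⁻¹ * ((1/(n:ℝ)) * Real.sqrt (∫ u in (0:ℝ)..((k:ℝ)/(n:ℝ)),
        f u / (((k:ℝ)+1)/(n:ℝ) - u)))
      ≤ Real.sqrt (Df f ((k:ℝ)/(n:ℝ)) (((k:ℝ)+1)/(n:ℝ))) := by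
    intro n k hk
    rw [Finset.mem_Ico] at hk
    have hn : 0 < (n:ℝ) := by
      have : 0 < n := lt_of_le_of_lt (Nat.zero_le _) hk.2
      exact_mod_cast this
    have hk1 : (1:ℝ) ≤ (k:ℝ) := by exact_mod_cast hk.1
    have hs : 0 < (k:ℝ)/(n:ℝ) := div_pos (by linarith) hn
    have hst : (k:ℝ)/(n:ℝ) < ((k:ℝ)+1)/(n:ℝ) := by
      rw [div_lt_div_iff₀ hn hn]
      nlinarith

    have hD := Df_ge f hf_nonneg hf_int hs hst
    have hts : ((k:ℝ)+1)/(n:ℝ) - (k:ℝ)/(n:ℝ) = 1/(n:ℝ) := by ring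
    rw [hts] at hD
    have hI : 0 ≤ ∫ u in (0:ℝ)..((k:ℝ)/(n:ℝ)), f u / (((k:ℝ)+1)/(n:ℝ) - u) := by
      apply intervalIntegral.integral_nonneg hs.le
      intro u hu
      apply div_nonneg (hf_nonneg u hu.1)
      have := hu.2
      linarith
    calc Real.sqrt 2⁻¹ * ((1/(n:ℝ)) * Real.sqrt (∫ u in (0:ℝ)..((k:ℝ)/(n:ℝ)),
          f u / (((k:ℝ)+1)/(n:ℝ) - u)))
        = Real.sqrt ((1/(n:ℝ))^2/2 * ∫ u in (0:ℝ)..((k:ℝ)/(n:ℝ)),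
            f u / (((k:ℝ)+1)/(n:ℝ) - u)) := by
          rw [show (1/(n:ℝ))^2/2 = 2⁻¹ * ((1/(n:ℝ))^2) by ring,
            Real.sqrt_mul (by positivity), Real.sqrt_mul (by positivity),
            Real.sqrt_inv, Real.sqrt_sq (by positivity)]
          ring
      _ ≤ Real.sqrt (Df f ((k:ℝ)/(n:ℝ)) (((k:ℝ)+1)/(n:ℝ))) := Real.sqrt_le_sqrt hD
  have bound : ∀ n : ℕ,
      Real.sqrt 2⁻¹ * ((1/(n:ℝ)) * ∑ k ∈ Finset.Ico 1 n,
        Real.sqrt (∫ u in (0:ℝ)..((k:ℝ)/(n:ℝ)), f u / (((k:ℝ)+1)/(n:ℝ) - u)))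
      ≤ ∑ k ∈ Finset.range n, Real.sqrt (Df f ((k:ℝ)/(n:ℝ)) (((k:ℝ)+1)/(n:ℝ))) := by
    intro n
    rw [Finset.mul_sum, Finset.mul_sum]
    calc (∑ k ∈ Finset.Ico 1 n, Real.sqrt 2⁻¹ * ((1/(n:ℝ)) *
          Real.sqrt (∫ u in (0:ℝ)..((k:ℝ)/(n:ℝ)), f u / (((k:ℝ)+1)/(n:ℝ) - u))))
        ≤ ∑ k ∈ Finset.Ico 1 n, Real.sqrt (Df f ((k:ℝ)/(n:ℝ)) (((k:ℝ)+1)/(n:ℝ))) :=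
          Finset.sum_le_sum (key n)
      _ ≤ ∑ k ∈ Finset.range n, Real.sqrt (Df f ((k:ℝ)/(n:ℝ)) (((k:ℝ)+1)/(n:ℝ))) := by
          apply Finset.sum_le_sum_of_subset_of_nonneg
          · rw [Finset.range_eq_Ico]
            exact Finset.Ico_subset_Ico (Nat.zero_le 1) le_rfl
          · intro i _ _
            exact Real.sqrt_nonneg _
  have hdiv2 := hdiv.const_mul_atTop (r := Real.sqrt 2⁻¹) (by positivity)
  apply tendsto_atTop_mono _ hdiv2
  intro n
  have := bound n
  simpa [mul_assoc] using this
end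

section
/- Let f(u) = u^α with −1 < α ≤ 0, or f(u) = e^{αu} with α ∈ ℝ. Then lim_{n→∞} Σ_{k=0}^{n−1} sqrt( D_f(k/n, (k+1)/n) ) = ∞, i.e., the sums of the square roots of the squared-increment variances over the uniform partitions of [0,1] diverge (this yields the almost-sure infinite variation on [0,1] of the Gaussian process with covariance K_f). -/
open MeasureTheory Real Filter

set_option maxHeartbeats 1000000

lemma kdiag (f : ℝ → ℝ) (hfint : IntervalIntegrable f volume 0 1)
    (x : ℝ) (hx0 : 0 ≤ x) (hx1 : x ≤ 1) :
    Kf f x x = 4 * Real.log 2 * ∫ u in (0:ℝ)..x, f u * (x - u) := by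
  have hIf : IntervalIntegrable f volume 0 x :=
    hfint.mono_set (Set.uIcc_subset_uIcc (by simp) (by simp [Set.mem_uIcc]; exact ⟨hx0, hx1⟩))
  unfold Kf
  rw [min_self]
  have hEq : Set.EqOn
      (fun u => f u * ((x + x - 2*u) * Real.log (x + x - 2*u)
        - (x - u) * Real.log (x - u) - (x - u) * Real.log (x - u)))
      (fun u => (2 * Real.log 2) * (f u * (x - u))) (Set.uIcc 0 x) := by
    intro u hu
    rw [Set.uIcc_of_le hx0] at hu
    simp only
    have hv : x + x - 2*u = 2*(x-u) := by ring
    rw [hv]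
    rcases eq_or_lt_of_le hu.2 with heq | hlt
    · subst heq; simp
    · have hxu : (0:ℝ) < x - u := by linarith
      rw [Real.log_mul two_ne_zero (ne_of_gt hxu)]
      ring
  rw [intervalIntegral.integral_congr hEq, intervalIntegral.integral_const_mul]
  ring

lemma logQ {x : ℝ} (hx : 1 ≤ x) :
    (x-1)/x + (x-1)^2/(4*x^2) ≤ Real.log x := by
  have hx0 : (0:ℝ) < x := by linarith
  set z := Real.sqrt x with hz
  have hz1 : 1 ≤ z := by
    rw [hz, show (1:ℝ) = Real.sqrt 1 by simp]
    exact Real.sqrt_le_sqrt hx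
  have hz0 : (0:ℝ) < z := by linarith
  have hzz : z^2 = x := Real.sq_sqrt hx0.le
  have hlog : Real.log x = 2 * Real.log z := by
    rw [hz, Real.log_sqrt hx0.le]; ring
  have h1 : 1 - z⁻¹ ≤ Real.log z := Real.one_sub_inv_le_log_of_pos hz0
  have key : (x-1)/x + (x-1)^2/(4*x^2) ≤ 2*(1 - z⁻¹) := by
    rw [← hzz, ← sub_nonneg]
    have expand : 2*(1-z⁻¹) - ((z^2-1)/z^2 + (z^2-1)^2/(4*(z^2)^2))
        = (z-1)^3*(3*z+1)/(4*z^4) := by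
      field_simp
      ring
    rw [expand]
    have h3 : (0:ℝ) ≤ (z-1)^3 := pow_nonneg (by linarith) 3
    exact div_nonneg (mul_nonneg h3 (by linarith)) (by positivity)
  rw [hlog]; linarith

lemma phi_lb {a b : ℝ} (ha : 0 ≤ a) (hab : a < b) :
    (b - a)^2/(16*b) ≤ a * Real.log a + b * Real.log b
      - (a + b) * (Real.log (a + b) - Real.log 2) := by
  have hb : 0 < b := lt_of_le_of_lt ha hab
  have hs : 0 < a + b := by linarith
  rcases eq_or_lt_of_le ha with rfl | ha0
  · simp only [Real.log_zero, mul_zero, zero_mul, zero_add, zero_sub, sub_zero]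
    have hlog2 : (0.6931471803:ℝ) < Real.log 2 := Real.log_two_gt_d9
    have h1 : b^2/(16*b) = b * (1/16) := by field_simp
    have h2 : b * Real.log b - b * (Real.log b - Real.log 2) = b * Real.log 2 := by ring
    nlinarith
  · have hA : a * (1 - (a+b)/(2*a)) ≤ a * Real.log (2*a/(a+b)) := by
      have hpos : (0:ℝ) < 2*a/(a+b) := by positivity
      have := Real.one_sub_inv_le_log_of_pos hpos
      have hinv : (2*a/(a+b))⁻¹ = (a+b)/(2*a) := by rw [inv_div]
      rw [hinv] at this
      exact mul_le_mul_of_nonneg_left this ha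
    have hx1 : (1:ℝ) ≤ 2*b/(a+b) := by
      rw [le_div_iff₀ hs]; linarith
    have hB0 := logQ hx1
    have e1 : (2*b/(a+b) - 1)/(2*b/(a+b)) = (b-a)/(2*b) := by
      field_simp; ring
    have e2 : (2*b/(a+b) - 1)^2/(4*(2*b/(a+b))^2) = (b-a)^2/(16*b^2) := by
      field_simp; ring
    rw [e1, e2] at hB0
    have hB : b * ((b-a)/(2*b) + (b-a)^2/(16*b^2)) ≤ b * Real.log (2*b/(a+b)) :=
      mul_le_mul_of_nonneg_left hB0 hb.le
    have idA : Real.log (2*a/(a+b)) = Real.log 2 + Real.log a - Real.log (a+b) := by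
      rw [Real.log_div (by positivity) (ne_of_gt hs), Real.log_mul two_ne_zero (ne_of_gt ha0)]
    have idB : Real.log (2*b/(a+b)) = Real.log 2 + Real.log b - Real.log (a+b) := by
      rw [Real.log_div (by positivity) (ne_of_gt hs), Real.log_mul two_ne_zero (ne_of_gt hb)]
    rw [idA] at hA
    rw [idB] at hB
    have c1 : a * (1 - (a+b)/(2*a)) = (a - b)/2 := by field_simp; ring
    have c2 : b * ((b-a)/(2*b) + (b-a)^2/(16*b^2)) = (b-a)/2 + (b-a)^2/(16*b) := by
      field_simp
    rw [c1] at hA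
    rw [c2] at hB
    nlinarith [hA, hB]

lemma key_lb (f : ℝ → ℝ) (m : ℝ) (hm : 0 < m)
    (hf0 : ∀ u : ℝ, 0 < u → u ≤ 1 → 0 ≤ f u)
    (hfm : ∀ u : ℝ, 1/4 ≤ u → u ≤ 1 → m ≤ f u)
    (hfint : IntervalIntegrable f volume 0 1)
    (s t : ℝ) (hs : 1/2 ≤ s) (hst : s < t) (ht : t ≤ 1) :
    m/4 * (t - s)^2 * (Real.log (t - 1/4) - Real.log (t - s)) ≤ Df f s t := by
  have hs0 : (0:ℝ) < s := by linarith
  have ht0 : (0:ℝ) < t := by linarith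
  have hII : ∀ a b : ℝ, 0 ≤ a → a ≤ 1 → 0 ≤ b → b ≤ 1 → IntervalIntegrable f volume a b := by
    intro a b ha0 ha1 hb0 hb1
    exact hfint.mono_set (Set.uIcc_subset_uIcc
      (by rw [Set.uIcc_of_le zero_le_one]; exact ⟨ha0, ha1⟩)
      (by rw [Set.uIcc_of_le zero_le_one]; exact ⟨hb0, hb1⟩))
  -- integrability of the pieces
  have hIt : IntervalIntegrable (fun u => f u * (t - u)) volume 0 t :=
    (hII 0 t le_rfl zero_le_one ht0.le ht).mul_continuousOn
      ((continuous_const.sub continuous_id).continuousOn)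
  have hIs1 : IntervalIntegrable (fun u => f u * (t - u)) volume 0 s :=
    (hII 0 s le_rfl zero_le_one hs0.le (by linarith)).mul_continuousOn
      ((continuous_const.sub continuous_id).continuousOn)
  have hIs2 : IntervalIntegrable (fun u => f u * (t - u)) volume s t :=
    (hII s t hs0.le (by linarith) ht0.le ht).mul_continuousOn
      ((continuous_const.sub continuous_id).continuousOn)
  have hIs3 : IntervalIntegrable (fun u => f u * (s - u)) volume 0 s :=
    (hII 0 s le_rfl zero_le_one hs0.le (by linarith)).mul_continuousOn
      ((continuous_const.sub continuous_id).continuousOn)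
  have contML : ∀ A : ℝ → ℝ, Continuous A → Continuous fun u => A u * Real.log (A u) :=
    fun A hA => Real.continuous_mul_log.comp hA
  have hc1 : Continuous fun u : ℝ => (s - u) * Real.log (s - u) :=
    contML _ (by continuity)
  have hc2 : Continuous fun u : ℝ => (t - u) * Real.log (t - u) :=
    contML _ (by continuity)
  have hc3 : Continuous fun u : ℝ => (s + t - 2*u) * Real.log (s + t - 2*u) :=
    contML _ (by continuity)
  have hc4 : Continuous fun u : ℝ => s + t - 2*u := by continuity
  have hcontg : Continuous (fun u : ℝ => (s + t - 2*u) * Real.log (s + t - 2*u)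
      - (s - u) * Real.log (s - u) - (t - u) * Real.log (t - u)) :=
    (hc3.sub hc1).sub hc2
  have hIg : IntervalIntegrable (fun u => f u * ((s + t - 2*u) * Real.log (s + t - 2*u)
      - (s - u) * Real.log (s - u) - (t - u) * Real.log (t - u))) volume 0 s :=
    (hII 0 s le_rfl zero_le_one hs0.le (by linarith)).mul_continuousOn hcontg.continuousOn
  -- Φ
  set Φ : ℝ → ℝ := fun u => f u * ((s - u) * Real.log (s - u) + (t - u) * Real.log (t - u)
      - (s + t - 2*u) * (Real.log (s + t - 2*u) - Real.log 2)) with hΦ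
  have hcontφ : Continuous (fun u : ℝ => (s - u) * Real.log (s - u) + (t - u) * Real.log (t - u)
      - (s + t - 2*u) * (Real.log (s + t - 2*u) - Real.log 2)) := by
    have h : Continuous fun u : ℝ => (s - u) * Real.log (s - u) + (t - u) * Real.log (t - u)
        - ((s + t - 2*u) * Real.log (s + t - 2*u) - (s + t - 2*u) * Real.log 2) :=
      (hc1.add hc2).sub (hc3.sub (hc4.mul continuous_const))
    exact h.congr (fun x => by ring)
  have hIΦ : IntervalIntegrable Φ volume 0 s :=
    (hII 0 s le_rfl zero_le_one hs0.le (by linarith)).mul_continuousOn hcontφ.continuousOn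
  have hlin : (∫ u in (0:ℝ)..s, Φ u)
      = Real.log 2 * (∫ u in (0:ℝ)..s, f u * (t - u))
        + Real.log 2 * (∫ u in (0:ℝ)..s, f u * (s - u))
        - ∫ u in (0:ℝ)..s, f u * ((s + t - 2*u) * Real.log (s + t - 2*u)
            - (s - u) * Real.log (s - u) - (t - u) * Real.log (t - u)) := by
    rw [← intervalIntegral.integral_const_mul, ← intervalIntegral.integral_const_mul,
        ← intervalIntegral.integral_add (hIs1.const_mul _) (hIs3.const_mul _),
        ← intervalIntegral.integral_sub ((hIs1.const_mul _).add (hIs3.const_mul _)) hIg]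
    apply intervalIntegral.integral_congr
    intro u _
    simp only [hΦ]
    ring
  have hsplit : (∫ u in (0:ℝ)..t, f u * (t-u))
      = (∫ u in (0:ℝ)..s, f u * (t-u)) + ∫ u in s..t, f u * (t-u) :=
    (intervalIntegral.integral_add_adjacent_intervals hIs1 hIs2).symm
  have hI2nn : 0 ≤ ∫ u in s..t, f u * (t-u) := by
    apply intervalIntegral.integral_nonneg hst.le
    intro u hu
    exact mul_nonneg (hf0 u (by linarith [hu.1]) (le_trans hu.2 ht)) (by linarith [hu.2])
  have hKst : Kf f s t = 2 * ∫ u in (0:ℝ)..s, f u * ((s + t - 2*u) * Real.log (s + t - 2*u)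
      - (s - u) * Real.log (s - u) - (t - u) * Real.log (t - u)) := by
    unfold Kf; rw [min_eq_left hst.le]
  have hDf : Df f s t = 4 * (∫ u in (0:ℝ)..s, Φ u)
      + 4 * Real.log 2 * ∫ u in s..t, f u * (t-u) := by
    unfold Df
    rw [kdiag f hfint t ht0.le ht, kdiag f hfint s hs0.le (by linarith), hKst, hsplit, hlin]
    ring
  have hlog2 : (0:ℝ) < Real.log 2 := Real.log_pos (by norm_num)
  have hDlb1 : 4 * (∫ u in (0:ℝ)..s, Φ u) ≤ Df f s t := by
    have h9 : 0 ≤ 4 * Real.log 2 * ∫ u in s..t, f u * (t-u) :=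
      mul_nonneg (by positivity) hI2nn
    rw [hDf]; linarith
  have hbr : ∀ u : ℝ, u ≤ s → (t-s)^2/(16*(t-u))
      ≤ (s - u) * Real.log (s - u) + (t - u) * Real.log (t - u)
        - (s + t - 2*u) * (Real.log (s + t - 2*u) - Real.log 2) := by
    intro u hu
    have h1 := phi_lb (a := s - u) (b := t - u) (by linarith) (by linarith)
    have e2 : (t - u) - (s - u) = t - s := by ring
    rw [e2] at h1
    have e : s + t - 2*u = (s - u) + (t - u) := by ring
    rw [e]
    exact h1
  have hΦnn : ∀ u ∈ Set.Ioc (0:ℝ) s, 0 ≤ Φ u := by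
    intro u hu
    have h1 := hbr u hu.2
    have h2 : 0 ≤ f u := hf0 u hu.1 (le_trans hu.2 (by linarith))
    have h3 : 0 < t - u := by linarith [hu.2]
    have h4 : 0 ≤ (t-s)^2/(16*(t-u)) := by positivity
    exact mul_nonneg h2 (le_trans h4 h1)
  have hmono1 : (∫ u in (1/4:ℝ)..s, Φ u) ≤ ∫ u in (0:ℝ)..s, Φ u := by
    apply intervalIntegral.integral_mono_interval (by norm_num) (by linarith) le_rfl ?_ hIΦ
    filter_upwards [ae_restrict_mem measurableSet_Ioc] with u hu using hΦnn u hu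
  set C := m * (t-s)^2/16 with hC
  have hψcont : ContinuousOn (fun u : ℝ => C * (t - u)⁻¹) (Set.uIcc (1/4:ℝ) s) := by
    apply ContinuousOn.mul continuousOn_const
    apply ContinuousOn.inv₀ ((continuous_sub_left t).continuousOn)
    intro u hu
    rw [Set.uIcc_of_le (by linarith)] at hu
    exact ne_of_gt (by linarith [hu.2])
  have hIψ : IntervalIntegrable (fun u : ℝ => C * (t - u)⁻¹) volume (1/4) s :=
    hψcont.intervalIntegrable
  have hIΦ2 : IntervalIntegrable Φ volume (1/4) s :=
    hIΦ.mono_set (Set.uIcc_subset_uIcc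
      (by rw [Set.uIcc_of_le hs0.le]; constructor <;> norm_num <;> linarith)
      (by rw [Set.uIcc_of_le hs0.le]; exact ⟨hs0.le, le_rfl⟩))
  have hmono2 : (∫ u in (1/4:ℝ)..s, C * (t-u)⁻¹) ≤ ∫ u in (1/4:ℝ)..s, Φ u := by
    apply intervalIntegral.integral_mono_on (by linarith) hIψ hIΦ2
    intro u hu
    have h3 : 0 < t - u := by linarith [hu.2]
    have hfu := hfm u hu.1 (le_trans hu.2 (by linarith))
    have e : C * (t-u)⁻¹ = m * ((t-s)^2/(16*(t-u))) := by
      rw [hC]; field_simp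
    rw [e]
    have h1 := hbr u hu.2
    calc m * ((t-s)^2/(16*(t-u)))
        ≤ f u * ((t-s)^2/(16*(t-u))) := mul_le_mul_of_nonneg_right hfu (by positivity)
      _ ≤ Φ u := by
          simp only [hΦ]
          exact mul_le_mul_of_nonneg_left h1 (le_trans hm.le hfu)
  have hftc : (∫ u in (1/4:ℝ)..s, C * (t-u)⁻¹)
      = C * Real.log (t - 1/4) - C * Real.log (t - s) := by
    have hd : ∀ u ∈ Set.uIcc (1/4:ℝ) s,
        HasDerivAt (fun v : ℝ => -C * Real.log (t - v)) (C * (t-u)⁻¹) u := by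
      intro u hu
      rw [Set.uIcc_of_le (by linarith)] at hu
      have h3 : t - u ≠ 0 := ne_of_gt (by linarith [hu.2])
      have h4 : HasDerivAt (fun v : ℝ => t - v) (-1) u := by
        simpa using (hasDerivAt_id u).const_sub t
      have h5 := h4.log h3
      have h6 := h5.const_mul (-C)
      rw [show C * (t-u)⁻¹ = -C * (-1 / (t - u)) by field_simp]
      exact h6
    have h7 := intervalIntegral.integral_eq_sub_of_hasDerivAt hd hIψ
    rw [h7]; ring
  calc m/4 * (t - s)^2 * (Real.log (t - 1/4) - Real.log (t - s))
      = 4 * (C * Real.log (t - 1/4) - C * Real.log (t - s)) := by rw [hC]; ring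
    _ = 4 * ∫ u in (1/4:ℝ)..s, C * (t-u)⁻¹ := by rw [hftc]
    _ ≤ 4 * ∫ u in (1/4:ℝ)..s, Φ u := by linarith
    _ ≤ 4 * ∫ u in (0:ℝ)..s, Φ u := by linarith
    _ ≤ Df f s t := hDlb1

lemma sqrt_tendsto_atTop' : Tendsto Real.sqrt atTop atTop := by
  apply Filter.tendsto_atTop_atTop.2
  intro b
  refine ⟨b^2, fun a ha => ?_⟩
  rcases le_or_gt b 0 with hb | hb
  · exact le_trans hb (Real.sqrt_nonneg a)
  · rw [show b = Real.sqrt (b^2) by rw [Real.sqrt_sq hb.le]]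
    exact Real.sqrt_le_sqrt ha

theorem stmt_8 (f : ℝ → ℝ)
    (hf : (∃ α : ℝ, -1 < α ∧ α ≤ 0 ∧ ∀ u : ℝ, 0 < u → f u = u ^ α) ∨
          (∃ α : ℝ, ∀ u : ℝ, 0 ≤ u → f u = Real.exp (α * u))) :
    Filter.Tendsto
      (fun n : ℕ => ∑ k ∈ Finset.range n,
        Real.sqrt (Df f ((k:ℝ)/(n:ℝ)) (((k:ℝ)+1)/(n:ℝ))))
      Filter.atTop Filter.atTop := by
  obtain ⟨m, hm, hf0, hfm, hfint⟩ : ∃ m : ℝ, 0 < m ∧ (∀ u : ℝ, 0 < u → u ≤ 1 → 0 ≤ f u)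
      ∧ (∀ u : ℝ, 1/4 ≤ u → u ≤ 1 → m ≤ f u) ∧ IntervalIntegrable f volume 0 1 := by
    rcases hf with ⟨α, hα1, hα0, hfa⟩ | ⟨α, hfa⟩
    · refine ⟨1, one_pos, ?_, ?_, ?_⟩
      · intro u hu _; rw [hfa u hu]; positivity
      · intro u h4 h1
        rw [hfa u (by linarith)]
        exact Real.one_le_rpow_of_pos_of_le_one_of_nonpos (by linarith) h1 hα0
      · rw [intervalIntegrable_iff_integrableOn_Ioc_of_le zero_le_one]
        have h2 : IntegrableOn (fun u : ℝ => u ^ α) (Set.Ioc 0 1) := by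
          rw [← intervalIntegrable_iff_integrableOn_Ioc_of_le zero_le_one]
          exact intervalIntegral.intervalIntegrable_rpow' hα1
        exact h2.congr_fun (fun u hu => (hfa u hu.1).symm) measurableSet_Ioc
    · refine ⟨Real.exp (-|α|), Real.exp_pos _, ?_, ?_, ?_⟩
      · intro u hu _; rw [hfa u hu.le]; positivity
      · intro u h4 h1
        rw [hfa u (by linarith)]
        apply Real.exp_le_exp.2
        have h5 : |α * u| ≤ |α| := by
          rw [abs_mul]
          have h6 : |u| ≤ 1 := by rw [abs_of_nonneg (by linarith)]; exact h1
          nlinarith [abs_nonneg α]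
        exact (abs_le.1 h5).1
      · rw [intervalIntegrable_iff_integrableOn_Ioc_of_le zero_le_one]
        have h2 : IntegrableOn (fun u : ℝ => Real.exp (α * u)) (Set.Ioc 0 1) :=
          (Real.continuous_exp.comp (continuous_const.mul continuous_id)).integrableOn_Ioc
        exact h2.congr_fun (fun u hu => (hfa u hu.1.le).symm) measurableSet_Ioc
  set L : ℕ → ℝ := fun n => Real.sqrt (m/4 * (Real.log n - Real.log 4)) / 4 with hL
  have hmain : ∀ n : ℕ, 8 ≤ n →
      L n ≤ ∑ k ∈ Finset.range n, Real.sqrt (Df f ((k:ℝ)/(n:ℝ)) (((k:ℝ)+1)/(n:ℝ))) := by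
    intro n hn8
    have hn0 : (0:ℝ) < n := by
      have : (8:ℝ) ≤ n := by exact_mod_cast hn8
      linarith
    have hn8' : (8:ℝ) ≤ n := by exact_mod_cast hn8
    set X := m/4 * (Real.log n - Real.log 4) with hX
    have hlogn : Real.log 4 ≤ Real.log n := Real.log_le_log (by norm_num) (by linarith)
    have hX0 : 0 ≤ X := by
      rw [hX]; apply mul_nonneg (by positivity); linarith
    -- per-term bound
    have per : ∀ k : ℕ, k ∈ Finset.Ico ((n+1)/2) n →
        (1/(n:ℝ)) * Real.sqrt X ≤ Real.sqrt (Df f ((k:ℝ)/(n:ℝ)) (((k:ℝ)+1)/(n:ℝ))) := by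
      intro k hk
      rw [Finset.mem_Ico] at hk
      have hk1 : n ≤ 2 * k := by omega
      have hk2 : k + 1 ≤ n := hk.2
      have hk1' : (n:ℝ) ≤ 2 * k := by exact_mod_cast hk1
      have hk2' : (k:ℝ) + 1 ≤ n := by exact_mod_cast hk2
      set s := (k:ℝ)/n with hs'
      set t := ((k:ℝ)+1)/n with ht'
      have hs : 1/2 ≤ s := by
        rw [hs', le_div_iff₀ hn0]; linarith
      have hst : s < t := by
        rw [hs', ht', div_lt_div_iff_of_pos_right hn0]; linarith
      have ht : t ≤ 1 := by
        rw [ht', div_le_one hn0]; linarith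
      have hts : t - s = 1/n := by
        rw [hs', ht', div_sub_div_same]; congr 1; ring
      have hkey := key_lb f m hm hf0 hfm hfint s t hs hst ht
      have hlog1 : Real.log (1/4) ≤ Real.log (t - 1/4) := by
        apply Real.log_le_log (by norm_num)
        have : 1/2 ≤ t := by linarith
        linarith
      have hlog2 : Real.log (t - 1/4) - Real.log (t - s)
          ≥ Real.log n - Real.log 4 := by
        have hIn : Real.log (1/(n:ℝ)) = - Real.log n := by
          rw [one_div, Real.log_inv]
        have h14 : Real.log (1/4) = - Real.log 4 := by
          rw [one_div, Real.log_inv]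
        rw [hts, hIn]
        linarith
      have hD1 : (1/(n:ℝ))^2 * X ≤ Df f s t := by
        have h1 : m/4 * (t-s)^2 * (Real.log n - Real.log 4)
            ≤ m/4 * (t-s)^2 * (Real.log (t - 1/4) - Real.log (t - s)) := by
          apply mul_le_mul_of_nonneg_left (by linarith)
          positivity
        have h2 : (1/(n:ℝ))^2 * X = m/4 * (t-s)^2 * (Real.log n - Real.log 4) := by
          rw [hX, hts]; ring
        linarith
      have hsq : Real.sqrt ((1/(n:ℝ))^2 * X) = (1/(n:ℝ)) * Real.sqrt X := by
        rw [Real.sqrt_mul (sq_nonneg _), Real.sqrt_sq (by positivity)]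
      calc (1/(n:ℝ)) * Real.sqrt X = Real.sqrt ((1/(n:ℝ))^2 * X) := hsq.symm
        _ ≤ Real.sqrt (Df f s t) := Real.sqrt_le_sqrt hD1
    -- sum bound
    have hsub : Finset.Ico ((n+1)/2) n ⊆ Finset.range n := by
      rw [Finset.range_eq_Ico]; exact Finset.Ico_subset_Ico (Nat.zero_le _) le_rfl
    have h1 : ∑ k ∈ Finset.Ico ((n+1)/2) n,
          Real.sqrt (Df f ((k:ℝ)/(n:ℝ)) (((k:ℝ)+1)/(n:ℝ)))
        ≤ ∑ k ∈ Finset.range n, Real.sqrt (Df f ((k:ℝ)/(n:ℝ)) (((k:ℝ)+1)/(n:ℝ))) :=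
      Finset.sum_le_sum_of_subset_of_nonneg hsub (fun i _ _ => Real.sqrt_nonneg _)
    have h2 : (Finset.Ico ((n+1)/2) n).card • ((1/(n:ℝ)) * Real.sqrt X)
        ≤ ∑ k ∈ Finset.Ico ((n+1)/2) n,
            Real.sqrt (Df f ((k:ℝ)/(n:ℝ)) (((k:ℝ)+1)/(n:ℝ))) :=
      Finset.card_nsmul_le_sum _ _ _ per
    have hcard : ((n:ℝ))/4 ≤ ((Finset.Ico ((n+1)/2) n).card : ℝ) := by
      rw [Nat.card_Ico]
      have hle : (n+1)/2 ≤ n := by omega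
      rw [Nat.cast_sub hle]
      have h3 : (((n+1)/2 : ℕ) : ℝ) ≤ ((n:ℝ)+1)/2 := by
        have h4 := Nat.cast_div_le (α := ℝ) (m := n+1) (n := 2)
        push_cast at h4
        exact h4
      linarith
    rw [nsmul_eq_mul] at h2
    have h5 : L n ≤ ((Finset.Ico ((n+1)/2) n).card : ℝ) * ((1/(n:ℝ)) * Real.sqrt X) := by
      have h7 : L n = Real.sqrt X / 4 := rfl
      have h6 : Real.sqrt X / 4 = ((n:ℝ)/4) * ((1/(n:ℝ)) * Real.sqrt X) := by
        field_simp
      rw [h7, h6]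
      apply mul_le_mul_of_nonneg_right hcard
      positivity
    linarith
  have hLtend : Tendsto L atTop atTop := by
    have t1 : Tendsto (fun n : ℕ => Real.log n) atTop atTop :=
      Real.tendsto_log_atTop.comp tendsto_natCast_atTop_atTop
    have t2 : Tendsto (fun n : ℕ => Real.log n - Real.log 4) atTop atTop := by
      simpa [sub_eq_add_neg] using tendsto_atTop_add_const_right atTop (-Real.log 4) t1
    have t3 : Tendsto (fun n : ℕ => m/4 * (Real.log n - Real.log 4)) atTop atTop :=
      t2.const_mul_atTop (by positivity)
    have t4 : Tendsto (fun n : ℕ => Real.sqrt (m/4 * (Real.log n - Real.log 4))) atTop atTop :=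
      sqrt_tendsto_atTop'.comp t3
    exact t4.atTop_div_const (by norm_num)
  exact tendsto_atTop_mono' atTop
    ((eventually_ge_atTop 8).mono hmain) hLtend
end

section
/- Let f(u) = u^α with α > −1, or f(u) = e^{αu} with α ∈ ℝ. Then lim_{n→∞} Σ_{k=0}^{n−1} D_f(k/n, (k+1)/n) = 0, i.e., the expected quadratic variation of a centered Gaussian process with covariance K_f along the uniform partitions of [0,1] tends to zero. -/
open MeasureTheory Real Filter

noncomputable def gfun (h a : ℝ) : ℝ :=
  a * Real.log a + (a + h) * Real.log (a + h)
    - (2*a + h) * Real.log (2*a + h) + (2*a + h) * Real.log 2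

lemma gfun_zero {h : ℝ} : gfun h 0 = h * Real.log 2 := by
  simp [gfun]

lemma log_sub_log_le {x y : ℝ} (hx : 0 < x) (hy : 0 < y) :
    Real.log x - Real.log y ≤ x / y - 1 := by
  have h1 : Real.log (x / y) ≤ x / y - 1 := Real.log_le_sub_one_of_pos (by positivity)
  rw [Real.log_div hx.ne' hy.ne'] at h1
  exact h1

lemma key_log_rel {h a : ℝ} (hh : 0 < h) (ha : 0 ≤ a) :
    (2*a + h) * Real.log (2*a + h) - (2*a + h) * Real.log 2
      = 2 * (a + h/2) * Real.log (a + h/2) := by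
  have h2 : a + h/2 = (2*a+h)/2 := by ring
  rw [h2, Real.log_div (by linarith) two_ne_zero]
  ring

lemma gfun_eq {h a : ℝ} (hh : 0 < h) (ha : 0 ≤ a) :
    gfun h a = (a + h) * (Real.log (a+h) - Real.log (a+h/2))
      + a * (Real.log a - Real.log (a+h/2)) := by
  have k := key_log_rel hh ha
  rw [gfun]
  linear_combination -k

lemma gfun_nonneg {h a : ℝ} (hh : 0 < h) (ha : 0 ≤ a) : 0 ≤ gfun h a := by
  rcases eq_or_lt_of_le ha with rfl | ha'
  · rw [gfun_zero]; positivity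
  · have hm : 0 < a + h/2 := by linarith
    have hah : 0 < a + h := by linarith
    rw [gfun_eq hh ha]
    have b1 : Real.log (a+h/2) - Real.log (a+h) ≤ (a+h/2) / (a+h) - 1 :=
      log_sub_log_le hm hah
    have b2 : Real.log (a+h/2) - Real.log a ≤ (a+h/2) / a - 1 :=
      log_sub_log_le hm ha'
    have c1 : (a+h) * (Real.log (a+h) - Real.log (a+h/2)) ≥ (a+h) * (1 - (a+h/2)/(a+h)) :=
      mul_le_mul_of_nonneg_left (by linarith) hah.le
    have c2 : a * (Real.log a - Real.log (a+h/2)) ≥ a * (1 - (a+h/2)/a) :=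
      mul_le_mul_of_nonneg_left (by linarith) ha
    have e2 : (a+h) * (1 - (a+h/2)/(a+h)) = h/2 := by
      rw [mul_sub, mul_one, mul_div_cancel₀ _ hah.ne']; ring
    have e3 : a * (1 - (a+h/2)/a) = -(h/2) := by
      rw [mul_sub, mul_one, mul_div_cancel₀ _ ha'.ne']; ring
    linarith

lemma gfun_le_div {h a : ℝ} (hh : 0 < h) (ha : 0 < a) : gfun h a ≤ h^2/(2*a) := by
  have hm : 0 < a + h/2 := by linarith
  have hah : 0 < a + h := by linarith
  rw [gfun_eq hh ha.le]
  have b1 : Real.log (a+h) - Real.log (a+h/2) ≤ (a+h)/(a+h/2) - 1 :=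
    log_sub_log_le hah hm
  have b2 : Real.log a - Real.log (a+h/2) ≤ a/(a+h/2) - 1 :=
    log_sub_log_le ha hm
  have c1 : (a+h) * (Real.log (a+h) - Real.log (a+h/2)) ≤ (a+h) * ((a+h)/(a+h/2) - 1) :=
    mul_le_mul_of_nonneg_left b1 hah.le
  have c2 : a * (Real.log a - Real.log (a+h/2)) ≤ a * (a/(a+h/2) - 1) :=
    mul_le_mul_of_nonneg_left b2 ha.le
  have e2 : (a+h) * ((a+h)/(a+h/2) - 1) + a * (a/(a+h/2) - 1) = (h^2/2)/(a+h/2) := by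
    field_simp
    ring
  have e3 : (h^2/2)/(a+h/2) ≤ h^2/(2*a) := by
    rw [div_le_div_iff₀ hm (by linarith)]
    nlinarith
  linarith

lemma gfun_hasDerivAt {h a : ℝ} (hh : 0 < h) (ha : 0 < a) :
    HasDerivAt (gfun h)
      (Real.log a + Real.log (a+h) - 2 * Real.log (2*a+h) + 2 * Real.log 2) a := by
  have h1 : HasDerivAt (fun x : ℝ => x * Real.log x) (Real.log a + 1) a :=
    Real.hasDerivAt_mul_log ha.ne'
  have h2 : HasDerivAt (fun x : ℝ => (x + h) * Real.log (x + h)) (Real.log (a+h) + 1) a := by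
    have := (Real.hasDerivAt_mul_log (show a + h ≠ 0 by positivity)).comp a
      ((hasDerivAt_id a).add_const h)
    simpa [Function.comp_def] using this
  have h3 : HasDerivAt (fun x : ℝ => (2*x + h) * Real.log (2*x + h))
      ((Real.log (2*a+h) + 1) * 2) a := by
    have := (Real.hasDerivAt_mul_log (show 2*a + h ≠ 0 by positivity)).comp a
      (((hasDerivAt_id a).const_mul 2).add_const h)
    simpa [Function.comp_def] using this
  have h4 : HasDerivAt (fun x : ℝ => (2*x + h) * Real.log 2) (2 * Real.log 2) a := by
    have := (((hasDerivAt_id a).const_mul 2).add_const h).mul_const (Real.log 2)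
    simpa using this
  have := ((h1.add h2).sub h3).add h4
  refine this.congr_deriv ?_
  ring

lemma gfun_deriv_nonpos {h a : ℝ} (hh : 0 < h) (ha : 0 < a) :
    deriv (gfun h) a ≤ 0 := by
  rw [(gfun_hasDerivAt hh ha).deriv]
  have key : Real.log a + Real.log (a+h) + 2 * Real.log 2 ≤ 2 * Real.log (2*a+h) := by
    have e1 : Real.log a + Real.log (a+h) + 2 * Real.log 2 = Real.log (4*a*(a+h)) := by
      rw [show (4:ℝ)*a*(a+h) = a * (a+h) * (2*2) by ring,
        Real.log_mul (by positivity) (by positivity),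
        Real.log_mul (by positivity) (by positivity),
        Real.log_mul (by norm_num) (by norm_num)]
      ring
    have e2 : 2 * Real.log (2*a+h) = Real.log ((2*a+h)*(2*a+h)) := by
      rw [Real.log_mul (by positivity) (by positivity)]; ring
    rw [e1, e2]
    apply Real.log_le_log (by positivity)
    nlinarith
  linarith

lemma gfun_continuousOn {h : ℝ} : Continuous (gfun h) := by
  unfold gfun
  have c1 : Continuous fun a : ℝ => a * Real.log a := Real.continuous_mul_log
  have c2 : Continuous fun a : ℝ => (a + h) * Real.log (a + h) :=
    Real.continuous_mul_log.comp (continuous_id.add continuous_const)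
  have c3 : Continuous fun a : ℝ => (2*a + h) * Real.log (2*a + h) :=
    Real.continuous_mul_log.comp ((continuous_const.mul continuous_id).add continuous_const)
  continuity

lemma gfun_antitoneOn {h : ℝ} (hh : 0 < h) : AntitoneOn (gfun h) (Set.Ici 0) := by
  apply antitoneOn_of_deriv_nonpos (convex_Ici 0) gfun_continuousOn.continuousOn
  · intro x hx
    rw [interior_Ici] at hx
    exact (gfun_hasDerivAt hh hx).differentiableAt.differentiableWithinAt
  · intro x hx
    rw [interior_Ici] at hx
    exact gfun_deriv_nonpos hh hx

lemma gfun_le_log2 {h a : ℝ} (hh : 0 < h) (ha : 0 ≤ a) : gfun h a ≤ h * Real.log 2 := by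
  rw [← gfun_zero]
  exact gfun_antitoneOn hh (Set.self_mem_Ici) ha ha



section DfEq
variable {f : ℝ → ℝ}

lemma fint_sub (hint : IntervalIntegrable f volume 0 1) {a b : ℝ}
    (ha : 0 ≤ a) (hab : a ≤ b) (hb : b ≤ 1) : IntervalIntegrable f volume a b :=
  hint.mono_set (by
    rw [Set.uIcc_of_le (by norm_num : (0:ℝ) ≤ 1)]
    exact Set.uIcc_subset_Icc ⟨ha, hab.trans hb⟩ ⟨ha.trans hab, hb⟩)

lemma fint_mul_cont (hint : IntervalIntegrable f volume 0 1) {a b : ℝ}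
    (ha : 0 ≤ a) (hab : a ≤ b) (hb : b ≤ 1) {φ : ℝ → ℝ} (hφ : Continuous φ) :
    IntervalIntegrable (fun u => f u * φ u) volume a b :=
  (fint_sub hint ha hab hb).mul_continuousOn hφ.continuousOn

lemma Kf_diag {t : ℝ} (ht : 0 ≤ t) :
    Kf f t t = 4 * Real.log 2 * ∫ u in (0:ℝ)..t, f u * (t - u) := by
  rw [Kf, min_self]
  have hcong : Set.EqOn
      (fun u => f u * ((t + t - 2*u) * Real.log (t + t - 2*u)
        - (t - u) * Real.log (t - u) - (t - u) * Real.log (t - u)))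
      (fun u => (2 * Real.log 2) * (f u * (t - u))) (Set.uIcc 0 t) := by
    intro u hu
    rw [Set.uIcc_of_le ht] at hu
    rcases eq_or_lt_of_le hu.2 with h | h
    · subst h
      have e1 : u + u - 2*u = 0 := by ring
      simp [e1]
    · have h1 : t + t - 2*u = 2*(t-u) := by ring
      simp only
      rw [h1, Real.log_mul two_ne_zero (by linarith : t - u ≠ 0)]
      ring
  rw [intervalIntegral.integral_congr hcong, intervalIntegral.integral_const_mul]
  ring

lemma Df_eq (hint : IntervalIntegrable f volume 0 1) {s t : ℝ}
    (hs : 0 ≤ s) (hst : s ≤ t) (ht : t ≤ 1) :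
    Df f s t = 4 * (∫ u in (0:ℝ)..s, f u * gfun (t-s) (s-u))
      + 4 * Real.log 2 * ∫ u in s..t, f u * (t-u) := by
  have ht0 : 0 ≤ t := hs.trans hst
  have i1 : IntervalIntegrable (fun u => f u * (t-u)) volume 0 s :=
    fint_mul_cont hint le_rfl hs (hst.trans ht) (by continuity)
  have i2 : IntervalIntegrable (fun u => f u * (t-u)) volume s t :=
    fint_mul_cont hint hs hst ht (by continuity)
  have i3 : IntervalIntegrable (fun u => f u * (s-u)) volume 0 s :=
    fint_mul_cont hint le_rfl hs (hst.trans ht) (by continuity)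
  have hφc : Continuous (fun u => (s + t - 2*u) * Real.log (s + t - 2*u)
      - (s - u) * Real.log (s - u) - (t - u) * Real.log (t - u)) := by
    have c1 : Continuous fun u : ℝ => (s + t - 2*u) * Real.log (s + t - 2*u) :=
      Real.continuous_mul_log.comp (by continuity)
    have c2 : Continuous fun u : ℝ => (s - u) * Real.log (s - u) :=
      Real.continuous_mul_log.comp (by continuity)
    have c3 : Continuous fun u : ℝ => (t - u) * Real.log (t - u) :=
      Real.continuous_mul_log.comp (by continuity)
    exact (c1.sub c2).sub c3
  have i4 : IntervalIntegrable (fun u => f u * ((s + t - 2*u) * Real.log (s + t - 2*u)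
      - (s - u) * Real.log (s - u) - (t - u) * Real.log (t - u))) volume 0 s :=
    fint_mul_cont hint le_rfl hs (hst.trans ht) hφc
  have hsplit : (∫ u in (0:ℝ)..t, f u * (t-u))
      = (∫ u in (0:ℝ)..s, f u * (t-u)) + ∫ u in s..t, f u * (t-u) :=
    (intervalIntegral.integral_add_adjacent_intervals i1 i2).symm
  have hcross : Kf f s t = 2 * ∫ u in (0:ℝ)..s,
      f u * ((s + t - 2*u) * Real.log (s + t - 2*u)
        - (s - u) * Real.log (s - u) - (t - u) * Real.log (t - u)) := by
    rw [Kf, min_eq_left hst]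
  have hkey : (∫ u in (0:ℝ)..s, f u * gfun (t-s) (s-u))
      = Real.log 2 * (∫ u in (0:ℝ)..s, f u * (t-u))
        + Real.log 2 * (∫ u in (0:ℝ)..s, f u * (s-u))
        - ∫ u in (0:ℝ)..s, f u * ((s + t - 2*u) * Real.log (s + t - 2*u)
            - (s - u) * Real.log (s - u) - (t - u) * Real.log (t - u)) := by
    rw [← intervalIntegral.integral_const_mul, ← intervalIntegral.integral_const_mul,
      ← intervalIntegral.integral_add (i1.const_mul _) (i3.const_mul _),
      ← intervalIntegral.integral_sub (((i1.const_mul _).add (i3.const_mul _))) i4]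
    apply intervalIntegral.integral_congr
    intro u _
    simp only [gfun]
    rw [show s - u + (t - s) = t - u by ring, show 2*(s-u) + (t-s) = s + t - 2*u by ring]
    ring
  rw [Df, Kf_diag ht0, Kf_diag hs, hcross, hsplit, hkey]
  ring

end DfEq
lemma ae_ne_zero : ∀ᵐ u : ℝ, u ≠ (0:ℝ) := by
  have h : {a : ℝ | ¬ a ≠ 0} = {0} := by ext x; simp
  rw [Filter.Eventually]; rw [MeasureTheory.mem_ae_iff]
  rw [show {a : ℝ | a ≠ 0}ᶜ = {0} from by ext x; simp]
  exact measure_singleton 0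

section Bounds
variable {f : ℝ → ℝ}

lemma Df_nonneg (hint : IntervalIntegrable f volume 0 1)
    (hpos : ∀ u ∈ Set.Ioc (0:ℝ) 1, 0 ≤ f u)
    {s t : ℝ} (hs : 0 ≤ s) (hst : s < t) (ht : t ≤ 1) : 0 ≤ Df f s t := by
  rw [Df_eq hint hs hst.le ht]
  have h1 : 0 ≤ ∫ u in (0:ℝ)..s, f u * gfun (t-s) (s-u) := by
    apply intervalIntegral.integral_nonneg_of_ae_restrict hs
    filter_upwards [MeasureTheory.ae_restrict_mem measurableSet_Icc,
      MeasureTheory.ae_restrict_of_ae (ae_ne_zero)] with u hu hne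
    have hu0 : 0 < u := lt_of_le_of_ne hu.1 (Ne.symm hne)
    exact mul_nonneg (hpos u ⟨hu0, hu.2.trans (hst.le.trans ht)⟩)
      (gfun_nonneg (by linarith) (by linarith [hu.2]))
  have h2 : 0 ≤ ∫ u in s..t, f u * (t - u) := by
    apply intervalIntegral.integral_nonneg_of_ae_restrict hst.le
    filter_upwards [MeasureTheory.ae_restrict_mem measurableSet_Icc,
      MeasureTheory.ae_restrict_of_ae (ae_ne_zero)] with u hu hne
    have hu0 : 0 < u := lt_of_le_of_ne (hs.trans hu.1) (Ne.symm hne)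
    exact mul_nonneg (hpos u ⟨hu0, hu.2.trans ht⟩) (by linarith [hu.2])
  have hl2 : 0 ≤ Real.log 2 := Real.log_nonneg (by norm_num)
  have := mul_nonneg hl2 h2
  linarith

lemma Ifun_nonneg (hpos : ∀ u ∈ Set.Ioc (0:ℝ) 1, 0 ≤ f u)
    {a b : ℝ} (ha : 0 ≤ a) (hab : a ≤ b) (hb : b ≤ 1) :
    0 ≤ ∫ u in a..b, f u := by
  apply intervalIntegral.integral_nonneg_of_ae_restrict hab
  filter_upwards [MeasureTheory.ae_restrict_mem measurableSet_Icc,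
    MeasureTheory.ae_restrict_of_ae (ae_ne_zero)] with u hu hne
  have hu0 : 0 < u := lt_of_le_of_ne (ha.trans hu.1) (Ne.symm hne)
  exact hpos u ⟨hu0, hu.2.trans hb⟩

noncomputable def Bnd (n i : ℕ) : ℝ := if i = 0 then Real.log 2 / n else 1/(2*i*n)

lemma Bnd_nonneg {n i : ℕ} : 0 ≤ Bnd n i := by
  unfold Bnd
  have hl2 : 0 ≤ Real.log 2 := Real.log_nonneg (by norm_num)
  split <;> positivity

lemma gfun_bound {n i : ℕ} (hn : 0 < n) {a : ℝ} (ha : (i:ℝ)/n ≤ a) :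
    gfun (1/(n:ℝ)) a ≤ Bnd n i := by
  have hnR : (0:ℝ) < n := Nat.cast_pos.2 hn
  have hh : (0:ℝ) < 1/n := by positivity
  have h0 : (0:ℝ) ≤ (i:ℝ)/n := by positivity
  have hmono : gfun (1/(n:ℝ)) a ≤ gfun (1/(n:ℝ)) ((i:ℝ)/n) :=
    gfun_antitoneOn hh (Set.mem_Ici.2 h0) (Set.mem_Ici.2 (h0.trans ha)) ha
  rcases Nat.eq_zero_or_pos i with rfl | hi
  · simp only [Bnd, if_pos rfl]
    have : gfun (1/(n:ℝ)) (((0:ℕ):ℝ)/n) = (1/(n:ℝ)) * Real.log 2 := by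
      norm_num [gfun_zero]
    rw [this] at hmono
    calc gfun (1/(n:ℝ)) a ≤ 1/(n:ℝ) * Real.log 2 := hmono
      _ = Real.log 2 / n := by ring
  · have hipos : (0:ℝ) < (i:ℝ)/n := by
      apply div_pos _ hnR
      exact_mod_cast hi
    have hb := gfun_le_div hh hipos
    have heq : (1/(n:ℝ))^2/(2*((i:ℝ)/n)) = 1/(2*i*n) := by
      field_simp
    simp only [Bnd, if_neg (Nat.pos_iff_ne_zero.1 hi)]
    rw [heq] at hb
    linarith

end Bounds
section MainBound
variable {f : ℝ → ℝ}

lemma piece_bound (hint : IntervalIntegrable f volume 0 1)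
    (hpos : ∀ u ∈ Set.Ioc (0:ℝ) 1, 0 ≤ f u)
    {n k j : ℕ} (hn : 0 < n) (hjk : j < k) (hkn : k < n) :
    (∫ u in ((j:ℝ)/n)..(((j:ℝ)+1)/n), f u * gfun (1/(n:ℝ)) ((k:ℝ)/n - u))
      ≤ Bnd n (k-1-j) * ∫ u in ((j:ℝ)/n)..(((j:ℝ)+1)/n), f u := by
  have hnR : (0:ℝ) < n := Nat.cast_pos.2 hn
  have hj0 : (0:ℝ) ≤ (j:ℝ)/n := by positivity
  have hjj : (j:ℝ)/n ≤ ((j:ℝ)+1)/n := by gcongr; linarith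
  have hjkR : (j:ℝ)+1 ≤ (k:ℝ) := by exact_mod_cast hjk
  have hknR : (k:ℝ) ≤ (n:ℝ) := by exact_mod_cast hkn.le
  have hj1 : ((j:ℝ)+1)/n ≤ 1 := by rw [div_le_one hnR]; linarith
  have hgc : Continuous (fun u : ℝ => gfun (1/(n:ℝ)) ((k:ℝ)/n - u)) :=
    gfun_continuousOn.comp (continuous_const.sub continuous_id)
  have int1 : IntervalIntegrable (fun u => f u * gfun (1/(n:ℝ)) ((k:ℝ)/n - u))
      volume ((j:ℝ)/n) (((j:ℝ)+1)/n) := fint_mul_cont hint hj0 hjj hj1 hgc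
  have int2 : IntervalIntegrable (fun u => Bnd n (k-1-j) * f u)
      volume ((j:ℝ)/n) (((j:ℝ)+1)/n) := (fint_sub hint hj0 hjj hj1).const_mul _
  have hcast : ((k-1-j:ℕ):ℝ) = (k:ℝ) - ((j:ℝ)+1) := by
    have e : k - 1 - j = k - (j+1) := by omega
    rw [e, Nat.cast_sub (by omega : j+1 ≤ k)]
    push_cast; ring
  have hmono : (∫ u in ((j:ℝ)/n)..(((j:ℝ)+1)/n), f u * gfun (1/(n:ℝ)) ((k:ℝ)/n - u))
      ≤ ∫ u in ((j:ℝ)/n)..(((j:ℝ)+1)/n), Bnd n (k-1-j) * f u := by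
    apply intervalIntegral.integral_mono_ae_restrict hjj int1 int2
    filter_upwards [MeasureTheory.ae_restrict_mem measurableSet_Icc,
      MeasureTheory.ae_restrict_of_ae (ae_ne_zero)] with u hu hne
    have hu0 : 0 < u := lt_of_le_of_ne (hj0.trans hu.1) (Ne.symm hne)
    have hfu : 0 ≤ f u := hpos u ⟨hu0, hu.2.trans hj1⟩
    have hg : gfun (1/(n:ℝ)) ((k:ℝ)/n - u) ≤ Bnd n (k-1-j) := by
      apply gfun_bound hn
      rw [hcast]
      have e2 : ((k:ℝ) - ((j:ℝ)+1))/n = (k:ℝ)/n - ((j:ℝ)+1)/n := by ring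
      rw [e2]
      linarith [hu.2]
    calc f u * gfun (1/(n:ℝ)) ((k:ℝ)/n - u) ≤ f u * Bnd n (k-1-j) :=
          mul_le_mul_of_nonneg_left hg hfu
      _ = Bnd n (k-1-j) * f u := mul_comm _ _
  rw [intervalIntegral.integral_const_mul] at hmono
  exact hmono

lemma term1_bound (hint : IntervalIntegrable f volume 0 1)
    (hpos : ∀ u ∈ Set.Ioc (0:ℝ) 1, 0 ≤ f u)
    {n k : ℕ} (hn : 0 < n) (hkn : k < n) :
    (∫ u in (0:ℝ)..((k:ℝ)/n), f u * gfun (1/(n:ℝ)) ((k:ℝ)/n - u))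
      ≤ ∑ j ∈ Finset.range k, Bnd n (k-1-j) * ∫ u in ((j:ℝ)/n)..(((j:ℝ)+1)/n), f u := by
  have hnR : (0:ℝ) < n := Nat.cast_pos.2 hn
  have hgc : Continuous (fun u : ℝ => gfun (1/(n:ℝ)) ((k:ℝ)/n - u)) :=
    gfun_continuousOn.comp (continuous_const.sub continuous_id)
  have hint' : ∀ j, j < k → IntervalIntegrable
      (fun u => f u * gfun (1/(n:ℝ)) ((k:ℝ)/n - u)) volume
      ((fun j : ℕ => (j:ℝ)/n) j) ((fun j : ℕ => (j:ℝ)/n) (j+1)) := by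
    intro j hj
    simp only
    have hj0 : (0:ℝ) ≤ (j:ℝ)/n := by positivity
    have hjj : (j:ℝ)/n ≤ ((j+1:ℕ):ℝ)/n := by gcongr; exact_mod_cast Nat.le_succ j
    have hj1 : ((j+1:ℕ):ℝ)/n ≤ 1 := by
      rw [div_le_one hnR]; exact_mod_cast (by omega : j+1 ≤ n)
    exact fint_mul_cont hint hj0 hjj hj1 hgc
  have hsplit := intervalIntegral.sum_integral_adjacent_intervals hint'
  simp only [Nat.cast_zero, zero_div] at hsplit
  rw [← hsplit]
  apply Finset.sum_le_sum
  intro j hj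
  have hb := piece_bound hint hpos hn (Finset.mem_range.1 hj) hkn
  simp only [Nat.cast_add, Nat.cast_one]
  exact hb
end MainBound
section MainBound2
variable {f : ℝ → ℝ}

lemma k_bound (hint : IntervalIntegrable f volume 0 1)
    (hpos : ∀ u ∈ Set.Ioc (0:ℝ) 1, 0 ≤ f u)
    {n k : ℕ} (hn : 0 < n) (hkn : k < n) :
    Df f ((k:ℝ)/n) (((k:ℝ)+1)/n)
      ≤ 4 * (∑ j ∈ Finset.range k, Bnd n (k-1-j) * ∫ u in ((j:ℝ)/n)..(((j:ℝ)+1)/n), f u)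
        + 4 * Real.log 2 / n * ∫ u in ((k:ℝ)/n)..(((k:ℝ)+1)/n), f u := by
  have hnR : (0:ℝ) < n := Nat.cast_pos.2 hn
  have hs : (0:ℝ) ≤ (k:ℝ)/n := by positivity
  have hst : (k:ℝ)/n ≤ ((k:ℝ)+1)/n := by gcongr; linarith
  have ht : ((k:ℝ)+1)/n ≤ 1 := by
    rw [div_le_one hnR]
    have : (k:ℝ)+1 ≤ (n:ℝ) := by exact_mod_cast hkn
    linarith
  rw [Df_eq hint hs hst ht]
  have hts : ((k:ℝ)+1)/n - (k:ℝ)/n = 1/(n:ℝ) := by ring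
  rw [hts]
  have h1 := term1_bound hint hpos hn hkn
  have h2 : (∫ u in ((k:ℝ)/n)..(((k:ℝ)+1)/n), f u * (((k:ℝ)+1)/n - u))
      ≤ (1/(n:ℝ)) * ∫ u in ((k:ℝ)/n)..(((k:ℝ)+1)/n), f u := by
    have int1 : IntervalIntegrable (fun u => f u * (((k:ℝ)+1)/n - u))
        volume ((k:ℝ)/n) (((k:ℝ)+1)/n) := fint_mul_cont hint hs hst ht (by continuity)
    have int2 : IntervalIntegrable (fun u => (1/(n:ℝ)) * f u)
        volume ((k:ℝ)/n) (((k:ℝ)+1)/n) := (fint_sub hint hs hst ht).const_mul _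
    have hmono := intervalIntegral.integral_mono_ae_restrict hst int1 int2 ?_
    · rw [intervalIntegral.integral_const_mul] at hmono; exact hmono
    · filter_upwards [MeasureTheory.ae_restrict_mem measurableSet_Icc,
        MeasureTheory.ae_restrict_of_ae (ae_ne_zero)] with u hu hne
      have hu0 : 0 < u := lt_of_le_of_ne (hs.trans hu.1) (Ne.symm hne)
      have hfu : 0 ≤ f u := hpos u ⟨hu0, hu.2.trans ht⟩
      have hub : ((k:ℝ)+1)/n - u ≤ 1/(n:ℝ) := by
        have := hu.1
        linarith [hts]
      calc f u * (((k:ℝ)+1)/n - u) ≤ f u * (1/(n:ℝ)) :=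
            mul_le_mul_of_nonneg_left hub hfu
        _ = (1/(n:ℝ)) * f u := mul_comm _ _
  have hl2 : (0:ℝ) ≤ Real.log 2 := Real.log_nonneg one_le_two
  have h3 := mul_le_mul_of_nonneg_left h2 (by linarith : (0:ℝ) ≤ 4 * Real.log 2)
  have he : 4 * Real.log 2 * ((1/(n:ℝ)) * ∫ u in ((k:ℝ)/n)..(((k:ℝ)+1)/n), f u)
      = 4 * Real.log 2 / n * ∫ u in ((k:ℝ)/n)..(((k:ℝ)+1)/n), f u := by ring
  linarith [he ▸ h3]

lemma Isum (hint : IntervalIntegrable f volume 0 1) {n : ℕ} (hn : 0 < n) :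
    ∑ k ∈ Finset.range n, (∫ u in ((k:ℝ)/n)..(((k:ℝ)+1)/n), f u)
      = ∫ u in (0:ℝ)..1, f u := by
  have hnR : (0:ℝ) < n := Nat.cast_pos.2 hn
  have hint' : ∀ k, k < n → IntervalIntegrable f volume
      ((fun k : ℕ => (k:ℝ)/n) k) ((fun k : ℕ => (k:ℝ)/n) (k+1)) := by
    intro k hk
    simp only
    refine fint_sub hint (by positivity) (by gcongr; exact_mod_cast Nat.le_succ k) ?_
    rw [div_le_one hnR]; exact_mod_cast hk
  have hsplit := intervalIntegral.sum_integral_adjacent_intervals hint'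
  simp only [Nat.cast_zero, zero_div] at hsplit
  rw [div_self hnR.ne'] at hsplit
  rw [← hsplit]
  apply Finset.sum_congr rfl
  intro k _
  simp [Nat.cast_add, Nat.cast_one]

lemma harm (m : ℕ) : ∑ i ∈ Finset.range m, (1:ℝ)/(i+1) ≤ 1 + Real.log m := by
  induction m with
  | zero => simp
  | succ m ih =>
    rw [Finset.sum_range_succ]
    rcases Nat.eq_zero_or_pos m with rfl | hm
    · norm_num
    · have hmR : (0:ℝ) < m := by exact_mod_cast hm
      have hlog : 1/((m:ℝ)+1) ≤ Real.log ((m:ℝ)+1) - Real.log m := by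
        have hx : (0:ℝ) < ((m:ℝ)+1)/m := by positivity
        have hb := Real.one_sub_inv_le_log_of_pos hx
        rw [Real.log_div (by linarith) hmR.ne'] at hb
        rw [show (((m:ℝ)+1)/m)⁻¹ = m/(m+1) from by rw [inv_div]] at hb
        have he : 1 - (m:ℝ)/(m+1) = 1/(m+1) := by field_simp; ring
        linarith [he ▸ hb]
      push_cast
      linarith

lemma BndSum {n : ℕ} (hn : 0 < n) :
    ∑ i ∈ Finset.range n, Bnd n i
      ≤ Real.log 2 / n + (1 + Real.log n)/(2*n) := by
  obtain ⟨m, rfl⟩ : ∃ m, n = m + 1 := ⟨n-1, by omega⟩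
  have hnR : (0:ℝ) < ((m:ℕ):ℝ) + 1 := by positivity
  rw [Finset.sum_range_succ']
  have h0 : Bnd (m+1) 0 = Real.log 2 / ((m:ℝ)+1) := by
    simp [Bnd]
  have hstep : ∀ i : ℕ, Bnd (m+1) (i+1) = (1/(2*((m:ℝ)+1))) * (1/((i:ℝ)+1)) := by
    intro i
    simp only [Bnd, if_neg (Nat.succ_ne_zero i)]
    push_cast
    field_simp
  have hsum : ∑ i ∈ Finset.range m, Bnd (m+1) (i+1)
      = (1/(2*((m:ℝ)+1))) * ∑ i ∈ Finset.range m, (1:ℝ)/(i+1) := by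
    rw [Finset.mul_sum]
    exact Finset.sum_congr rfl fun i _ => hstep i
  have hlogmono : Real.log m ≤ Real.log ((m:ℝ)+1) := by
    rcases Nat.eq_zero_or_pos m with rfl | hm
    · simp
    · exact Real.log_le_log (by exact_mod_cast hm) (by linarith)
  have hharm := harm m
  have hc : (0:ℝ) ≤ 1/(2*((m:ℝ)+1)) := by positivity
  have hle : ∑ i ∈ Finset.range m, Bnd (m+1) (i+1)
      ≤ (1/(2*((m:ℝ)+1))) * (1 + Real.log ((m:ℝ)+1)) := by
    rw [hsum]
    apply mul_le_mul_of_nonneg_left _ hc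
    linarith
  rw [h0]
  push_cast
  have he : (1/(2*((m:ℝ)+1))) * (1 + Real.log ((m:ℝ)+1))
      = (1 + Real.log ((m:ℝ)+1))/(2*((m:ℝ)+1)) := by ring
  push_cast at hle
  linarith [he ▸ hle]

end MainBound2
section TriSum

lemma triangle_sum {n : ℕ} (c I : ℕ → ℝ) (hc : ∀ i, i < n → 0 ≤ c i)
    (hI : ∀ j, j < n → 0 ≤ I j) :
    ∑ k ∈ Finset.range n, ∑ j ∈ Finset.range k, c (k-1-j) * I j
      ≤ (∑ i ∈ Finset.range n, c i) * (∑ j ∈ Finset.range n, I j) := by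
  have hrefl : ∀ k, ∑ j ∈ Finset.range k, c (k-1-j) * I j
      = ∑ i ∈ Finset.range k, c i * I (k-1-i) := by
    intro k
    rw [← Finset.sum_range_reflect (fun i => c i * I (k-1-i)) k]
    apply Finset.sum_congr rfl
    intro j hj
    have hj' := Finset.mem_range.1 hj
    have e : k - 1 - (k-1-j) = j := by omega
    simp only [e]
  calc ∑ k ∈ Finset.range n, ∑ j ∈ Finset.range k, c (k-1-j) * I j
      = ∑ k ∈ Finset.range n, ∑ i ∈ Finset.range k, c i * I (k-1-i) := by
        exact Finset.sum_congr rfl fun k _ => hrefl k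
    _ = ∑ k ∈ Finset.range n, ∑ i ∈ Finset.range n,
          (if i < k then c i * I (k-1-i) else 0) := by
        apply Finset.sum_congr rfl
        intro k hk
        have hk' := Finset.mem_range.1 hk
        rw [← Finset.sum_filter]
        apply Finset.sum_congr _ fun _ _ => rfl
        ext i
        simp only [Finset.mem_range, Finset.mem_filter]
        omega
    _ = ∑ i ∈ Finset.range n, ∑ k ∈ Finset.range n,
          (if i < k then c i * I (k-1-i) else 0) := Finset.sum_comm
    _ ≤ ∑ i ∈ Finset.range n, c i * ∑ j ∈ Finset.range n, I j := by
        apply Finset.sum_le_sum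
        intro i hi
        have hi' := Finset.mem_range.1 hi
        have e1 : ∑ k ∈ Finset.range n, (if i < k then c i * I (k-1-i) else 0)
            = ∑ k ∈ Finset.Ico (i+1) n, c i * I (k-1-i) := by
          rw [← Finset.sum_filter]
          apply Finset.sum_congr _ fun _ _ => rfl
          ext k
          simp only [Finset.mem_range, Finset.mem_filter, Finset.mem_Ico]
          omega
        rw [e1, Finset.sum_Ico_eq_sum_range]
        have e2 : ∑ j ∈ Finset.range (n - (i+1)), c i * I (i+1+j-1-i)
            = c i * ∑ j ∈ Finset.range (n - (i+1)), I j := by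
          rw [Finset.mul_sum]
          apply Finset.sum_congr rfl
          intro j _
          have e : i+1+j-1-i = j := by omega
          rw [e]
        rw [e2]
        apply mul_le_mul_of_nonneg_left _ (hc i hi')
        apply Finset.sum_le_sum_of_subset_of_nonneg
        · exact Finset.range_subset_range.2 (by omega)
        · intro j hj _
          exact hI j (Finset.mem_range.1 hj)
    _ = (∑ i ∈ Finset.range n, c i) * (∑ j ∈ Finset.range n, I j) := by
        rw [← Finset.sum_mul]

end TriSum

section Total
variable {f : ℝ → ℝ}

lemma total_bound (hint : IntervalIntegrable f volume 0 1)
    (hpos : ∀ u ∈ Set.Ioc (0:ℝ) 1, 0 ≤ f u) {n : ℕ} (hn : 0 < n) :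
    ∑ k ∈ Finset.range n, Df f ((k:ℝ)/n) (((k:ℝ)+1)/n)
      ≤ (4 * (Real.log 2 / n + (1 + Real.log n)/(2*n)) + 4 * Real.log 2 / n)
          * ∫ u in (0:ℝ)..1, f u := by
  have hnR : (0:ℝ) < n := Nat.cast_pos.2 hn
  set I0 := ∫ u in (0:ℝ)..1, f u with hI0
  set Ipc := fun j : ℕ => ∫ u in ((j:ℝ)/n)..(((j:ℝ)+1)/n), f u with hIpc
  have hIpc_nonneg : ∀ j, j < n → 0 ≤ Ipc j := by
    intro j hj
    apply Ifun_nonneg hpos (by positivity) (by gcongr; linarith)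
    rw [div_le_one hnR]
    have : (j:ℝ)+1 ≤ (n:ℝ) := by exact_mod_cast hj
    linarith
  have hI0_nonneg : 0 ≤ I0 := Ifun_nonneg hpos le_rfl zero_le_one le_rfl
  have hsum1 : ∑ k ∈ Finset.range n, Df f ((k:ℝ)/n) (((k:ℝ)+1)/n)
      ≤ ∑ k ∈ Finset.range n,
          (4 * (∑ j ∈ Finset.range k, Bnd n (k-1-j) * Ipc j)
            + 4 * Real.log 2 / n * Ipc k) :=
    Finset.sum_le_sum fun k hk => k_bound hint hpos hn (Finset.mem_range.1 hk)
  have hsum2 : ∑ k ∈ Finset.range n,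
      (4 * (∑ j ∈ Finset.range k, Bnd n (k-1-j) * Ipc j)
        + 4 * Real.log 2 / n * Ipc k)
      = 4 * (∑ k ∈ Finset.range n, ∑ j ∈ Finset.range k, Bnd n (k-1-j) * Ipc j)
        + 4 * Real.log 2 / n * ∑ k ∈ Finset.range n, Ipc k := by
    rw [Finset.sum_add_distrib, ← Finset.mul_sum, ← Finset.mul_sum]
  have htri := triangle_sum (Bnd n) Ipc (fun i _ => Bnd_nonneg) hIpc_nonneg
  have hIsum : ∑ k ∈ Finset.range n, Ipc k = I0 := Isum hint hn
  have hBsum := BndSum hn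
  have hBsum_nonneg : 0 ≤ ∑ i ∈ Finset.range n, Bnd n i :=
    Finset.sum_nonneg fun i _ => Bnd_nonneg
  have h4 : (∑ i ∈ Finset.range n, Bnd n i) * I0
      ≤ (Real.log 2 / n + (1 + Real.log n)/(2*n)) * I0 :=
    mul_le_mul_of_nonneg_right hBsum hI0_nonneg
  rw [hIsum] at htri
  calc ∑ k ∈ Finset.range n, Df f ((k:ℝ)/n) (((k:ℝ)+1)/n)
      ≤ 4 * (∑ k ∈ Finset.range n, ∑ j ∈ Finset.range k, Bnd n (k-1-j) * Ipc j)
        + 4 * Real.log 2 / n * ∑ k ∈ Finset.range n, Ipc k := by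
        rw [← hsum2]; exact hsum1
    _ ≤ 4 * ((Real.log 2 / n + (1 + Real.log n)/(2*n)) * I0)
        + 4 * Real.log 2 / n * I0 := by
        rw [hIsum]
        have := le_trans htri h4
        linarith
    _ = (4 * (Real.log 2 / n + (1 + Real.log n)/(2*n)) + 4 * Real.log 2 / n) * I0 := by
        ring

end Total
section Final
variable {f : ℝ → ℝ}

lemma sum_nonneg_Df (hint : IntervalIntegrable f volume 0 1)
    (hpos : ∀ u ∈ Set.Ioc (0:ℝ) 1, 0 ≤ f u) {n : ℕ} (hn : 0 < n) :
    0 ≤ ∑ k ∈ Finset.range n, Df f ((k:ℝ)/n) (((k:ℝ)+1)/n) := by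
  have hnR : (0:ℝ) < n := Nat.cast_pos.2 hn
  apply Finset.sum_nonneg
  intro k hk
  have hk' := Finset.mem_range.1 hk
  apply Df_nonneg hint hpos (by positivity)
  · exact (div_lt_div_iff_of_pos_right hnR).2 (by linarith)
  · rw [div_le_one hnR]
    have : (k:ℝ)+1 ≤ (n:ℝ) := by exact_mod_cast hk'
    linarith

lemma main_tendsto (hint : IntervalIntegrable f volume 0 1)
    (hpos : ∀ u ∈ Set.Ioc (0:ℝ) 1, 0 ≤ f u) :
    Filter.Tendsto
      (fun n : ℕ => ∑ k ∈ Finset.range n,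
        Df f ((k:ℝ)/(n:ℝ)) (((k:ℝ)+1)/(n:ℝ)))
      Filter.atTop (nhds 0) := by
  set I0 := ∫ u in (0:ℝ)..1, f u with hI0
  set γ : ℕ → ℝ := fun n =>
    (8*Real.log 2*I0 + 2*I0) * (1/(n:ℝ)) + (2*I0) * (Real.log n/(n:ℝ)) with hγ
  have t1 : Tendsto (fun n : ℕ => 1/(n:ℝ)) atTop (nhds 0) :=
    tendsto_one_div_atTop_nhds_zero_nat
  have t2 : Tendsto (fun n : ℕ => Real.log n / (n:ℝ)) atTop (nhds 0) := by
    have h := Real.isLittleO_log_id_atTop.tendsto_div_nhds_zero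
    have := h.comp tendsto_natCast_atTop_atTop (α := ℕ)
    simpa [Function.comp_def] using this
  have tγ : Tendsto γ atTop (nhds 0) := by
    have h := (t1.const_mul (8*Real.log 2*I0 + 2*I0)).add (t2.const_mul (2*I0))
    have h0 : (8*Real.log 2*I0 + 2*I0) * 0 + (2*I0) * 0 = 0 := by ring
    rw [h0] at h
    exact h
  apply tendsto_of_tendsto_of_tendsto_of_le_of_le' tendsto_const_nhds tγ
  · filter_upwards [eventually_ge_atTop 1] with n hn
    exact sum_nonneg_Df hint hpos hn
  · filter_upwards [eventually_ge_atTop 1] with n hn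
    have hnR : (0:ℝ) < n := Nat.cast_pos.2 hn
    have hb := total_bound hint hpos hn
    have he : (4 * (Real.log 2 / n + (1 + Real.log n)/(2*n)) + 4 * Real.log 2 / n) * I0
        = γ n := by
      rw [hγ]
      field_simp
      ring
    rw [he] at hb
    exact hb

end Final

theorem stmt_9 (f : ℝ → ℝ)
    (hf : (∃ α : ℝ, -1 < α ∧ ∀ u : ℝ, 0 < u → f u = u ^ α) ∨
          (∃ α : ℝ, ∀ u : ℝ, 0 ≤ u → f u = Real.exp (α * u))) :
    Filter.Tendsto
      (fun n : ℕ => ∑ k ∈ Finset.range n,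
        Df f ((k:ℝ)/(n:ℝ)) (((k:ℝ)+1)/(n:ℝ)))
      Filter.atTop (nhds 0) := by
  have hred : IntervalIntegrable f volume 0 1 ∧ ∀ u ∈ Set.Ioc (0:ℝ) 1, 0 ≤ f u := by
    rcases hf with ⟨α, hα, hfα⟩ | ⟨α, hfα⟩
    · constructor
      · have base : IntervalIntegrable (fun x : ℝ => x ^ α) volume 0 1 :=
          intervalIntegral.intervalIntegrable_rpow' hα
        rw [intervalIntegrable_iff] at base ⊢
        rw [Set.uIoc_of_le (zero_le_one)] at base ⊢
        exact base.congr_fun (fun u hu => (hfα u hu.1).symm) measurableSet_Ioc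
      · intro u hu; rw [hfα u hu.1]; exact Real.rpow_nonneg hu.1.le α
    · constructor
      · have base : IntervalIntegrable (fun u : ℝ => Real.exp (α*u)) volume 0 1 :=
          (Real.continuous_exp.comp (continuous_const.mul continuous_id)).intervalIntegrable 0 1
        rw [intervalIntegrable_iff] at base ⊢
        rw [Set.uIoc_of_le (zero_le_one)] at base ⊢
        exact base.congr_fun (fun u hu => (hfα u hu.1.le).symm) measurableSet_Ioc
      · intro u hu; rw [hfα u hu.1.le]; exact (Real.exp_pos _).le
  exact main_tendsto hred.1 hred.2
end

section
/- Let T > 0 and let f : [0,∞) → [0,∞) be measurable with ∫_0^δ f(u) du < ∞ for every δ > 0, and suppose there is a constant c_f > 0 with 0 ≤ f(u) ≤ c_f for all u ∈ [0,T]. Then for every κ ∈ (0,1) there exists a constant C > 0 (depending on f, κ, T) such that D_f(s,t) ≤ C |t−s|^{2−κ} for all s,t ∈ [0,T]. -/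
open MeasureTheory Real Filter

private lemma log2_mul (x : ℝ) :
    (2*x) * Real.log (2*x) - 2*(x * Real.log x) = 2 * x * Real.log 2 := by
  rcases eq_or_ne x 0 with h | h
  · simp [h]
  · rw [Real.log_mul two_ne_zero h]; ring

private lemma keyG (a h κ : ℝ) (ha : 0 < a) (hh : 0 < h) (hκ0 : 0 < κ) (hκ1 : κ < 1) :
    Real.log 2 * (2*(a)+(h)) -
      ((2*(a)+(h)) * Real.log (2*(a)+(h)) - a * Real.log a - (a+h) * Real.log (a+h))
      ≤ h ^ (2 - κ) * a ^ (κ - 1) := by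
  have hm : 0 < a + h/2 := by linarith
  have h2m : 0 < 2*(a)+(h) := by linarith
  have hb : 0 < a + h := by linarith
  have step1 : Real.log 2 * (2*(a)+(h)) -
      ((2*(a)+(h)) * Real.log (2*(a)+(h)) - a * Real.log a - (a+h) * Real.log (a+h))
      ≤ h^2 / (2*a + h) := by
    have e1 : Real.log (2*(a)+(h)) = Real.log 2 + Real.log (a + h/2) := by
      rw [← Real.log_mul two_ne_zero (ne_of_gt hm)]; ring_nf
    have l1 : Real.log a - Real.log (a + h/2) ≤ a/(a+h/2) - 1 := by
      rw [← Real.log_div (ne_of_gt ha) (ne_of_gt hm)]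
      exact Real.log_le_sub_one_of_pos (div_pos ha hm)
    have l2 : Real.log (a+h) - Real.log (a + h/2) ≤ (a+h)/(a+h/2) - 1 := by
      rw [← Real.log_div (ne_of_gt hb) (ne_of_gt hm)]
      exact Real.log_le_sub_one_of_pos (div_pos hb hm)
    have l1' : a * (Real.log a - Real.log (a+h/2)) ≤ a * (a/(a+h/2) - 1) :=
      mul_le_mul_of_nonneg_left l1 ha.le
    have l2' : (a+h) * (Real.log (a+h) - Real.log (a+h/2)) ≤ (a+h) * ((a+h)/(a+h/2) - 1) :=
      mul_le_mul_of_nonneg_left l2 hb.le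
    have key : a * (a/(a+h/2) - 1) + (a+h) * ((a+h)/(a+h/2) - 1) = h^2/(2*a+h) := by
      field_simp
      ring
    rw [e1]
    nlinarith [l1', l2']
  refine step1.trans ?_
  rcases le_total a h with hle | hle
  · have t1 : h^2/(2*a+h) ≤ h := by
      rw [div_le_iff₀ h2m]; nlinarith
    have t2 : h = h ^ ((2-κ)) * h^((κ-1)) := by
      rw [← Real.rpow_add hh]
      norm_num
    have t3 : h ^ (κ-1) ≤ a ^ (κ-1) :=
      Real.rpow_le_rpow_of_nonpos ha hle (by linarith)
    calc h^2/(2*a+h) ≤ h := t1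
      _ = h ^ (2-κ) * h^(κ-1) := t2
      _ ≤ h ^ (2-κ) * a^(κ-1) :=
          mul_le_mul_of_nonneg_left t3 (Real.rpow_nonneg hh.le _)
  · have e : h^(2:ℕ) = h^(2-κ) * h^κ := by
      rw [← Real.rpow_natCast h 2, ← Real.rpow_add hh]
      norm_num
    have e2 : a^(κ-1) = a^κ / a := by
      rw [Real.rpow_sub ha, Real.rpow_one]
    have hκa : h^κ ≤ a^κ := Real.rpow_le_rpow hh.le hle hκ0.le
    calc h^2/(2*a+h) ≤ h^2/a := by
          apply div_le_div_of_nonneg_left (by positivity) ha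
          linarith
      _ = h^(2-κ) * h^κ / a := by rw [e]
      _ ≤ h^(2-κ) * a^κ / a := by
          exact (div_le_div_iff_of_pos_right ha).mpr
            (mul_le_mul_of_nonneg_left hκa (Real.rpow_nonneg hh.le _))
      _ = h^(2-κ) * a^(κ-1) := by rw [e2]; ring

private lemma integral_sub_rpow (s r : ℝ) (hs : 0 ≤ s) (hr : -1 < r) :
    ∫ u in (0:ℝ)..s, (s - u) ^ r = s^(r+1)/(r+1) := by
  have h := intervalIntegral.integral_comp_sub_left (a := 0) (b := s) (fun x : ℝ => x ^ r) s
  simp only [sub_zero, sub_self] at h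
  rw [h, integral_rpow (Or.inl hr), Real.zero_rpow (by linarith : r+1 ≠ 0), sub_zero]

private lemma aux (T : ℝ) (hT : 0 < T) (f : ℝ → ℝ) (hf_meas : Measurable f)
    (hf_nonneg : ∀ u, 0 ≤ u → 0 ≤ f u)
    (hf_int : ∀ δ : ℝ, 0 < δ → IntervalIntegrable f volume 0 δ)
    (c : ℝ) (hc : 0 < c) (hbound : ∀ u ∈ Set.Icc (0:ℝ) T, f u ≤ c)
    (κ : ℝ) (hκ0 : 0 < κ) (hκ1 : κ < 1)
    (s t : ℝ) (hs : s ∈ Set.Icc (0:ℝ) T) (ht : t ∈ Set.Icc (0:ℝ) T) (hst : s < t) :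
    Df f s t ≤ (4*c*T^κ/κ + 2*Real.log 2*c*T^κ) * (t - s) ^ (2-κ) := by
  obtain ⟨hs0, hsT⟩ := hs
  obtain ⟨ht0, htT⟩ := ht
  have hts : 0 < t - s := sub_pos.mpr hst
  have hfT : IntervalIntegrable f volume 0 T := hf_int T hT
  have hsub : ∀ p q : ℝ, p ∈ Set.Icc (0:ℝ) T → q ∈ Set.Icc (0:ℝ) T →
      IntervalIntegrable f volume p q := by
    intro p q hp hq
    refine hfT.mono_set ?_
    rw [Set.uIcc_of_le hT.le]
    exact Set.uIcc_subset_Icc hp hq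
  have h0T : (0:ℝ) ∈ Set.Icc (0:ℝ) T := ⟨le_refl 0, hT.le⟩
  have hsI : s ∈ Set.Icc (0:ℝ) T := ⟨hs0, hsT⟩
  have htI : t ∈ Set.Icc (0:ℝ) T := ⟨ht0, htT⟩
  have contL : ∀ g : ℝ → ℝ, Continuous g →
      Continuous (fun u => g u * Real.log (g u)) :=
    fun g hg => Real.continuous_mul_log.comp hg
  -- the diagonal formula
  have Kdiag : ∀ r : ℝ, Kf f r r = (4 * Real.log 2) * ∫ u in (0:ℝ)..r, f u * (r - u) := by
    intro r
    simp only [Kf, min_self]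
    rw [show (∫ u in (0:ℝ)..r, f u * ((r + r - 2*u) * Real.log (r + r - 2*u)
        - (r - u) * Real.log (r - u) - (r - u) * Real.log (r - u)))
        = ∫ u in (0:ℝ)..r, (2*Real.log 2) * (f u * (r - u)) from
      intervalIntegral.integral_congr fun u _ => by
        rw [show r + r - 2*u = 2*(r-u) from by ring]
        linear_combination (f u) * log2_mul (r-u)]
    rw [intervalIntegral.integral_const_mul]
    ring
  -- integrability of all integrands
  have i1 : IntervalIntegrable (fun u => f u * (s - u)) volume 0 s :=
    (hsub 0 s h0T hsI).mul_continuousOn (Continuous.continuousOn (by fun_prop))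
  have i2 : IntervalIntegrable (fun u => f u * (t - u)) volume 0 s :=
    (hsub 0 s h0T hsI).mul_continuousOn (Continuous.continuousOn (by fun_prop))
  have i3 : IntervalIntegrable (fun u => f u * (t - u)) volume s t :=
    (hsub s t hsI htI).mul_continuousOn (Continuous.continuousOn (by fun_prop))
  have contBig : Continuous (fun u : ℝ => (s + t - 2*u) * Real.log (s + t - 2*u)
      - (s - u) * Real.log (s - u) - (t - u) * Real.log (t - u)) := by
    exact ((contL (fun u => s + t - 2*u) (by fun_prop)).sub
      (contL (fun u => s - u) (by fun_prop))).sub (contL (fun u => t - u) (by fun_prop))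
  have i4 : IntervalIntegrable (fun u => f u * ((s + t - 2*u) * Real.log (s + t - 2*u)
      - (s - u) * Real.log (s - u) - (t - u) * Real.log (t - u))) volume 0 s :=
    (hsub 0 s h0T hsI).mul_continuousOn contBig.continuousOn
  have contG : Continuous (fun u : ℝ => Real.log 2 * (2*(s-u)+(t-s)) -
      ((2*(s-u)+(t-s)) * Real.log (2*(s-u)+(t-s)) - (s-u) * Real.log (s-u)
        - ((s-u)+(t-s)) * Real.log ((s-u)+(t-s)))) := by
    exact (continuous_const.mul (by fun_prop)).sub
      (((contL (fun u => 2*(s-u)+(t-s)) (by fun_prop)).sub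
        (contL (fun u => s - u) (by fun_prop))).sub
        (contL (fun u => (s-u)+(t-s)) (by fun_prop)))
  have iG : IntervalIntegrable (fun u => f u * (Real.log 2 * (2*(s-u)+(t-s)) -
      ((2*(s-u)+(t-s)) * Real.log (2*(s-u)+(t-s)) - (s-u) * Real.log (s-u)
        - ((s-u)+(t-s)) * Real.log ((s-u)+(t-s))))) volume 0 s :=
    (hsub 0 s h0T hsI).mul_continuousOn contG.continuousOn
  -- split the diagonal integral for t
  have split : (∫ u in (0:ℝ)..t, f u * (t - u))
      = (∫ u in (0:ℝ)..s, f u * (t - u)) + ∫ u in s..t, f u * (t - u) :=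
    (intervalIntegral.integral_add_adjacent_intervals i2 i3).symm
  -- the G-integral identity
  have subIG : (∫ u in (0:ℝ)..s, f u * (Real.log 2 * (2*(s-u)+(t-s)) -
      ((2*(s-u)+(t-s)) * Real.log (2*(s-u)+(t-s)) - (s-u) * Real.log (s-u)
        - ((s-u)+(t-s)) * Real.log ((s-u)+(t-s)))))
      = Real.log 2 * (∫ u in (0:ℝ)..s, f u * (s - u))
        + Real.log 2 * (∫ u in (0:ℝ)..s, f u * (t - u))
        - ∫ u in (0:ℝ)..s, f u * ((s + t - 2*u) * Real.log (s + t - 2*u)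
            - (s - u) * Real.log (s - u) - (t - u) * Real.log (t - u)) := by
    rw [← intervalIntegral.integral_const_mul, ← intervalIntegral.integral_const_mul,
      ← intervalIntegral.integral_add (i1.const_mul _) (i2.const_mul _),
      ← intervalIntegral.integral_sub ((i1.const_mul _).add (i2.const_mul _)) i4]
    refine intervalIntegral.integral_congr fun u _ => ?_
    rw [show 2*(s-u)+(t-s) = s + t - 2*u from by ring,
        show (s-u)+(t-s) = t - u from by ring]
    ring
  -- the decomposition of Df
  have keyeq : Df f s t = 4 * (∫ u in (0:ℝ)..s, f u * (Real.log 2 * (2*(s-u)+(t-s)) -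
      ((2*(s-u)+(t-s)) * Real.log (2*(s-u)+(t-s)) - (s-u) * Real.log (s-u)
        - ((s-u)+(t-s)) * Real.log ((s-u)+(t-s)))))
      + (4 * Real.log 2) * ∫ u in s..t, f u * (t - u) := by
    have hKst : Kf f s t = 2 * ∫ u in (0:ℝ)..s, f u * ((s + t - 2*u) * Real.log (s + t - 2*u)
        - (s - u) * Real.log (s - u) - (t - u) * Real.log (t - u)) := by
      simp only [Kf, min_eq_left hst.le]
    simp only [Df, hKst, Kdiag s, Kdiag t, split, subIG]
    ring
  have hκm1 : (-1:ℝ) < κ - 1 := by linarith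
  have iRrpow : IntervalIntegrable (fun u : ℝ => (s - u)^(κ-1)) volume 0 s := by
    have h := (intervalIntegral.intervalIntegrable_rpow' (a := (0:ℝ)) (b := s) hκm1).comp_sub_left s
    simpa using h.symm
  have iR : IntervalIntegrable (fun u : ℝ => (c*(t-s)^(2-κ)) * (s-u)^(κ-1)) volume 0 s :=
    iRrpow.const_mul _
  have b1 : (∫ u in (0:ℝ)..s, f u * (Real.log 2 * (2*(s-u)+(t-s)) -
      ((2*(s-u)+(t-s)) * Real.log (2*(s-u)+(t-s)) - (s-u) * Real.log (s-u)
        - ((s-u)+(t-s)) * Real.log ((s-u)+(t-s)))))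
      ≤ ∫ u in (0:ℝ)..s, (c*(t-s)^(2-κ)) * (s-u)^(κ-1) := by
    refine intervalIntegral.integral_mono_ae_restrict hs0 iG iR ?_
    have h1 : ∀ᵐ u ∂(volume.restrict (Set.Icc (0:ℝ) s)), u ∈ Set.Icc (0:ℝ) s :=
      ae_restrict_mem measurableSet_Icc
    have h2 : ∀ᵐ u ∂(volume.restrict (Set.Icc (0:ℝ) s)), u ≠ s := by
      refine ae_restrict_of_ae ?_
      have he : {u : ℝ | ¬ u ≠ s} = {s} := by ext x; simp
      rw [ae_iff, he]
      exact measure_singleton s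
    filter_upwards [h1, h2] with u hu hus
    have hau : 0 < s - u := sub_pos.mpr (lt_of_le_of_ne hu.2 hus)
    have hGb := keyG (s-u) (t-s) κ hau hts hκ0 hκ1
    refine le_trans (mul_le_mul_of_nonneg_left hGb (hf_nonneg u hu.1)) ?_
    have hfc : f u ≤ c := hbound u ⟨hu.1, hu.2.trans hsT⟩
    have e1 : (0:ℝ) ≤ (t-s)^(2-κ) := Real.rpow_nonneg hts.le _
    have e2 : (0:ℝ) ≤ (s-u)^(κ-1) := Real.rpow_nonneg hau.le _
    nlinarith [mul_nonneg e1 e2, hf_nonneg u hu.1]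
  have b1' : (∫ u in (0:ℝ)..s, (c*(t-s)^(2-κ)) * (s-u)^(κ-1))
      = (c*(t-s)^(2-κ)) * (s^κ/κ) := by
    rw [intervalIntegral.integral_const_mul, integral_sub_rpow s (κ-1) hs0 hκm1,
      show κ - 1 + 1 = κ from by ring]
  have b2 : (∫ u in s..t, f u * (t-u)) ≤ c * ((t-s)^2/2) := by
    have hmono : (∫ u in s..t, f u * (t-u)) ≤ ∫ u in s..t, c * (t-u) := by
      refine intervalIntegral.integral_mono_on hst.le i3
        (Continuous.intervalIntegrable (by fun_prop) _ _) ?_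
      intro u hu
      have h1 : (0:ℝ) ≤ t - u := by linarith [hu.2]
      exact mul_le_mul_of_nonneg_right (hbound u ⟨le_trans hs0 hu.1, le_trans hu.2 htT⟩) h1
    have hcomp : (∫ u in s..t, c * (t-u)) = c * ((t-s)^2/2) := by
      rw [intervalIntegral.integral_const_mul]
      congr 1
      have h := intervalIntegral.integral_comp_sub_left (a := s) (b := t) (fun x : ℝ => x) t
      simp only [sub_self] at h
      rw [h, integral_id]
      ring
    exact hmono.trans_eq hcomp
  have hL : 0 < Real.log 2 := Real.log_pos one_lt_two
  have final1 : 4 * (∫ u in (0:ℝ)..s, f u * (Real.log 2 * (2*(s-u)+(t-s)) -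
      ((2*(s-u)+(t-s)) * Real.log (2*(s-u)+(t-s)) - (s-u) * Real.log (s-u)
        - ((s-u)+(t-s)) * Real.log ((s-u)+(t-s)))))
      ≤ 4 * ((c*(t-s)^(2-κ)) * (s^κ/κ)) := by
    have := b1.trans_eq b1'
    linarith
  have final2 : (4 * Real.log 2) * (∫ u in s..t, f u * (t - u))
      ≤ (4 * Real.log 2) * (c * ((t-s)^2/2)) :=
    mul_le_mul_of_nonneg_left b2 (by nlinarith)
  rw [keyeq]
  refine le_trans (add_le_add final1 final2) ?_
  have epow : ((t-s):ℝ)^(2:ℕ) = (t-s)^(2-κ) * (t-s)^κ := by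
    rw [← Real.rpow_natCast (t-s) 2, ← Real.rpow_add hts]
    norm_num
  have fs : s^κ ≤ T^κ := Real.rpow_le_rpow hs0 hsT hκ0.le
  have fh : (t-s)^κ ≤ T^κ := Real.rpow_le_rpow hts.le (by linarith) hκ0.le
  have hX : (0:ℝ) ≤ (t-s)^(2-κ) := Real.rpow_nonneg hts.le _
  calc 4 * ((c*(t-s)^(2-κ)) * (s^κ/κ)) + (4 * Real.log 2) * (c * ((t-s)^2/2))
      = (4*c*(s^κ/κ) + 2*Real.log 2*c*(t-s)^κ) * (t-s)^(2-κ) := by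
        rw [epow]; ring
    _ ≤ (4*c*T^κ/κ + 2*Real.log 2*c*T^κ) * (t - s)^(2-κ) := by
        refine mul_le_mul_of_nonneg_right ?_ hX
        have g0 : s^κ/κ ≤ T^κ/κ := (div_le_div_iff_of_pos_right hκ0).mpr fs
        have g1 : 4*c*(s^κ/κ) ≤ 4*c*(T^κ/κ) := by nlinarith
        have g2 : 2*Real.log 2*c*(t-s)^κ ≤ 2*Real.log 2*c*T^κ :=
          mul_le_mul_of_nonneg_left fh (by nlinarith)
        have g3 : 4*c*(T^κ/κ) = 4*c*T^κ/κ := by ring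
        linarith


theorem stmt_11 (T : ℝ) (hT : 0 < T) (f : ℝ → ℝ) (hf_meas : Measurable f)
    (hf_nonneg : ∀ u, 0 ≤ u → 0 ≤ f u)
    (hf_int : ∀ δ : ℝ, 0 < δ → IntervalIntegrable f volume 0 δ)
    (c : ℝ) (hc : 0 < c) (hbound : ∀ u ∈ Set.Icc (0:ℝ) T, f u ≤ c)
    (κ : ℝ) (hκ : κ ∈ Set.Ioo (0:ℝ) 1) :
    ∃ C : ℝ, 0 < C ∧ ∀ s ∈ Set.Icc (0:ℝ) T, ∀ t ∈ Set.Icc (0:ℝ) T,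
      Df f s t ≤ C * |t - s| ^ (2 - κ) := by
  obtain ⟨hκ0, hκ1⟩ := hκ
  have hL : 0 < Real.log 2 := Real.log_pos one_lt_two
  have hTκ : 0 < T^κ := Real.rpow_pos_of_pos hT κ
  refine ⟨4*c*T^κ/κ + 2*Real.log 2*c*T^κ, ?_, ?_⟩
  · have h1 : 0 < 4*c*T^κ/κ := div_pos (by nlinarith) hκ0
    have h2 : 0 < 2*Real.log 2*c*T^κ := mul_pos (mul_pos (mul_pos two_pos hL) hc) hTκ
    linarith
  · intro s hs t ht
    rcases lt_trichotomy s t with h | h | h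
    · rw [abs_of_pos (sub_pos.mpr h)]
      exact aux T hT f hf_meas hf_nonneg hf_int c hc hbound κ hκ0 hκ1 s t hs ht h
    · subst h
      have hD : Df f s s = 0 := by simp only [Df]; ring
      rw [hD, sub_self, abs_zero, Real.zero_rpow (by linarith : (2:ℝ) - κ ≠ 0), mul_zero]
    · have hk : Kf f s t = Kf f t s := by
        simp only [Kf]
        rw [min_comm]
        congr 1
        refine intervalIntegral.integral_congr fun u _ => ?_
        rw [show t + s - 2*u = s + t - 2*u from by ring]
        ring
      have hsym : Df f s t = Df f t s := by simp only [Df, hk]; ring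
      rw [hsym, abs_sub_comm, abs_of_pos (sub_pos.mpr h)]
      exact aux T hT f hf_meas hf_nonneg hf_int c hc hbound κ hκ0 hκ1 t s ht hs h
end
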